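/- arXiv:cond-mat/0302514 — 10 statements merged into one kernel-verified Lean document; each statement's English description precedes it below -/
import Mathlib

section
/- For every real w with w ≥ x_V/x_U there exists a unique x₁(w) in the open interval (0, x_V/w) such that U(x₁(w))·V(w·x₁(w)) = 1; moreover this solution satisfies x₁(w) < x_U. -/
open Filter Topology Set

/-! With `ρ = x_V / w ≤ x_U`, the map `F x = U x * V (w x)` is continuous and strictly increasing
on `[0, ρ)`, vanishes at `0` (as `p 0 = 0`) and tends to `+∞` at `ρ⁻`, because `V (w x)` blows up
while `U x` stays bounded below by `U (ρ / 2) > 0`. The intermediate value theorem gives the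
unique solution, which lies below `ρ ≤ x_U`. -/

theorem StrictMonoOn.mul_monotoneOn_of_nonneg_of_pos {α β : Type*} [Preorder α] [Semiring β]
    [PartialOrder β] [PosMulMono β] [MulPosStrictMono β] {f g : α → β} {s : Set α}
    (hf : StrictMonoOn f s) (hg : MonotoneOn g s) (hf0 : ∀ x ∈ s, 0 ≤ f x)
    (hg0 : ∀ x ∈ s, 0 < g x) : StrictMonoOn (fun x => f x * g x) s :=
  fun _ hx _ hy h => mul_lt_mul_of_lt_of_le_of_nonneg_of_pos (hf hx hy h) (hg hx hy h.le)
    (hf0 _ hx) (hg0 _ hy)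

theorem existsUnique_eq_of_strictMonoOn_of_tendsto_atTop {F : ℝ → ℝ} {a ρ c : ℝ} (ha : a < ρ)
    (hcont : ContinuousOn F (Ico a ρ)) (hmono : StrictMonoOn F (Ico a ρ)) (hFa : F a < c)
    (hlim : Tendsto F (𝓝[<] ρ) atTop) : ∃! x, x ∈ Ioo a ρ ∧ F x = c := by
  obtain ⟨r, hcr, hr⟩ := ((hlim.eventually_gt_atTop c).and (Ioo_mem_nhdsLT ha)).exists
  obtain ⟨x, hx, hFx⟩ := intermediate_value_Ioo hr.1.le
    (hcont.mono (Icc_subset_Ico_right hr.2)) ⟨hFa, hcr⟩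
  refine ⟨x, ⟨⟨hx.1, hx.2.trans hr.2⟩, hFx⟩, fun y ⟨hy, hFy⟩ => ?_⟩
  exact hmono.injOn (Ioo_subset_Ico_self hy) ⟨hx.1.le, hx.2.trans hr.2⟩ (hFy.trans hFx.symm)

theorem tendsto_mul_atTop_of_monotoneOn {f g : ℝ → ℝ} {a ρ : ℝ} (ha : a < ρ)
    (hf : MonotoneOn f (Ico a ρ)) (hfa : 0 < f a) (hg : Tendsto g (𝓝[<] ρ) atTop) :
    Tendsto (fun x => f x * g x) (𝓝[<] ρ) atTop := by
  refine tendsto_atTop_mono' _ ?_ (hg.const_mul_atTop hfa)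
  filter_upwards [Ioo_mem_nhdsLT ha, hg.eventually_ge_atTop 0] with x hx hgx
  exact mul_le_mul_of_nonneg_right
    (hf (left_mem_Ico.2 ha) (Ioo_subset_Ico_self hx) hx.1.le) hgx

theorem tendsto_const_mul_nhdsLT {w : ℝ} (hw : 0 < w) (y : ℝ) :
    Tendsto (fun x => w * x) (𝓝[<] (y / w)) (𝓝[<] y) := by
  have hy : w * (y / w) = y := mul_div_cancel₀ y hw.ne'
  refine tendsto_nhdsWithin_of_tendsto_nhds_of_eventually_within _ ?_ ?_
  · simpa only [hy] using ((continuous_const_mul w).tendsto (y / w)).mono_left nhdsWithin_le_nhds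
  · filter_upwards [self_mem_nhdsWithin] with x (hx : x < y / w)
    exact (mul_lt_mul_of_pos_left hx hw).trans_eq hy

section PowerSeries

variable {a : ℕ → ℝ}

theorem tsum_mul_pow_zero : ∑' n, a n * (0 : ℝ) ^ n = a 0 := by
  rw [tsum_eq_single 0 fun n hn => by simp [hn]]
  simp

theorem tsum_mul_pow_pos (ha : ∀ n, 0 ≤ a n) {x : ℝ} (hx : 0 ≤ x)
    (hs : Summable fun n => a n * x ^ n) {N : ℕ} (hN : 0 < a N * x ^ N) :
    0 < ∑' n, a n * x ^ n :=
  hs.tsum_pos (fun n => mul_nonneg (ha n) (pow_nonneg hx n)) N hN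

theorem tsum_mul_pow_le_tsum_mul_pow (ha : ∀ n, 0 ≤ a n) {x y : ℝ} (hx : 0 ≤ x) (hxy : x ≤ y)
    (hy : Summable fun n => a n * y ^ n) : ∑' n, a n * x ^ n ≤ ∑' n, a n * y ^ n := by
  have hle : ∀ n, a n * x ^ n ≤ a n * y ^ n := fun n =>
    mul_le_mul_of_nonneg_left (pow_le_pow_left₀ hx hxy n) (ha n)
  exact (hy.of_nonneg_of_le (fun n => mul_nonneg (ha n) (pow_nonneg hx n)) hle).tsum_le_tsum hle hy

theorem tsum_mul_pow_lt_tsum_mul_pow (ha : ∀ n, 0 ≤ a n) {N : ℕ} (hN : N ≠ 0) (haN : 0 < a N)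
    {x y : ℝ} (hx : 0 ≤ x) (hxy : x < y) (hy : Summable fun n => a n * y ^ n) :
    ∑' n, a n * x ^ n < ∑' n, a n * y ^ n :=
  Summable.tsum_lt_tsum_of_nonneg (fun n => mul_nonneg (ha n) (pow_nonneg hx n))
    (fun n => mul_le_mul_of_nonneg_left (pow_le_pow_left₀ hx hxy.le n) (ha n))
    (mul_lt_mul_of_pos_left (pow_lt_pow_left₀ hxy hx hN) haN) hy

variable {R : ℝ} (hconv : ∀ x, 0 ≤ x → x < R → Summable fun n => a n * x ^ n)
include hconv

theorem monotoneOn_tsum_mul_pow (ha : ∀ n, 0 ≤ a n) :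
    MonotoneOn (fun x => ∑' n, a n * x ^ n) (Ico 0 R) :=
  fun _ hx _ hy hxy => tsum_mul_pow_le_tsum_mul_pow ha hx.1 hxy (hconv _ hy.1 hy.2)

theorem strictMonoOn_tsum_mul_pow (ha : ∀ n, 0 ≤ a n) {N : ℕ} (hN : N ≠ 0) (haN : 0 < a N) :
    StrictMonoOn (fun x => ∑' n, a n * x ^ n) (Ico 0 R) :=
  fun _ hx _ hy hxy => tsum_mul_pow_lt_tsum_mul_pow ha hN haN hx.1 hxy (hconv _ hy.1 hy.2)

theorem continuousOn_tsum_mul_pow (ha : ∀ n, 0 ≤ a n) :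
    ContinuousOn (fun x => ∑' n, a n * x ^ n) (Ico 0 R) := by
  intro x hx
  obtain ⟨r, hxr, hrR⟩ := exists_between hx.2
  -- Weierstrass M-test on `[0, r]`, a neighbourhood of `x` within `[0, R)`.
  have hcont : ContinuousOn (fun x => ∑' n, a n * x ^ n) (Icc 0 r) := by
    refine continuousOn_tsum (fun n => (continuous_const.mul (continuous_pow n)).continuousOn)
      (hconv r (hx.1.trans hxr.le) hrR) fun n z hz => ?_
    rw [Real.norm_eq_abs, abs_of_nonneg (mul_nonneg (ha n) (pow_nonneg hz.1 n))]
    exact mul_le_mul_of_nonneg_left (pow_le_pow_left₀ hz.1 hz.2 n) (ha n)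
  refine (hcont x ⟨hx.1, hxr.le⟩).mono_of_mem_nhdsWithin ?_
  filter_upwards [self_mem_nhdsWithin, nhdsWithin_le_nhds (Iio_mem_nhds hxr)] with z hz hzr
  exact ⟨hz.1, le_of_lt hzr⟩

end PowerSeries

theorem stmt_0_general
    (p b : ℕ → ℝ)
    (hp : ∀ n, 0 ≤ p n) (hp0 : p 0 = 0)
    (hb : ∀ n, 0 ≤ b n) (hb0 : 0 < b 0)
    (hpN : ∃ N, 1 ≤ N ∧ 0 < p N)
    (U V : ℝ → ℝ)
    (hU : ∀ x, U x = ∑' n, p n * x ^ n)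
    (hV : ∀ x, V x = ∑' n, b n * x ^ n)
    (xU xV : ℝ) (hxU0 : 0 < xU) (hxUV : xU < xV)
    (hUconv : ∀ x : ℝ, 0 ≤ x → x < xU → Summable fun n => p n * x ^ n)
    (hVconv : ∀ x : ℝ, 0 ≤ x → x < xV → Summable fun n => b n * x ^ n)
    (hVinf : Filter.Tendsto V (𝓝[<] xV) Filter.atTop)
    (w : ℝ) (hw : xV / xU ≤ w) :
    (∃! x : ℝ, x ∈ Set.Ioo 0 (xV / w) ∧ U x * V (w * x) = 1) ∧
      (∀ x : ℝ, x ∈ Set.Ioo 0 (xV / w) → U x * V (w * x) = 1 → x < xU) := by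
  obtain ⟨N, hN, hpN⟩ := hpN
  have hw0 : 0 < w := (one_pos.trans ((one_lt_div hxU0).2 hxUV)).trans_le hw
  have hρ0 : 0 < xV / w := div_pos (hxU0.trans hxUV) hw0
  have hρU : xV / w ≤ xU := (div_le_comm₀ hw0 hxU0).2 hw
  have hsub : Ico 0 (xV / w) ⊆ Ico 0 xU := Ico_subset_Ico_right hρU
  have hmaps : MapsTo (w * ·) (Ico 0 (xV / w)) (Ico 0 xV) := fun x hx =>
    ⟨mul_nonneg hw0.le hx.1, (lt_div_iff₀' hw0).1 hx.2⟩
  have hUmono : StrictMonoOn U (Ico 0 (xV / w)) :=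
    (funext hU ▸ strictMonoOn_tsum_mul_pow hUconv hp (by omega) hpN).mono hsub
  have hUcont : ContinuousOn U (Ico 0 (xV / w)) :=
    (funext hU ▸ continuousOn_tsum_mul_pow hUconv hp).mono hsub
  have hVmono : MonotoneOn (fun x => V (w * x)) (Ico 0 (xV / w)) :=
    (funext hV ▸ monotoneOn_tsum_mul_pow hVconv hb).comp
      (fun x _ y _ hxy => mul_le_mul_of_nonneg_left hxy hw0.le) hmaps
  have hVcont : ContinuousOn (fun x => V (w * x)) (Ico 0 (xV / w)) :=
    (funext hV ▸ continuousOn_tsum_mul_pow hVconv hb).comp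
      (continuous_const_mul w).continuousOn hmaps
  have hUhalf : 0 < U (xV / w / 2) := (hU _).symm ▸
    tsum_mul_pow_pos hp (by positivity) (hUconv _ (by positivity) (by linarith)) (N := N)
      (by positivity)
  have hlim : Tendsto (fun x => U x * V (w * x)) (𝓝[<] (xV / w)) atTop :=
    tendsto_mul_atTop_of_monotoneOn (half_lt_self hρ0)
      (hUmono.monotoneOn.mono (Ico_subset_Ico_left (by positivity))) hUhalf
      (hVinf.comp (tendsto_const_mul_nhdsLT hw0 xV))
  refine ⟨existsUnique_eq_of_strictMonoOn_of_tendsto_atTop hρ0 (hUcont.mul hVcont) ?_ ?_ hlim,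
    fun x hx _ => hx.2.trans_le hρU⟩
  · exact hUmono.mul_monotoneOn_of_nonneg_of_pos hVmono
      (fun x hx => (hU x).symm ▸ tsum_nonneg fun n => mul_nonneg (hp n) (pow_nonneg hx.1 n))
      fun x hx => (hV _).symm ▸ tsum_mul_pow_pos hb (hmaps hx).1
        (hVconv _ (hmaps hx).1 (hmaps hx).2) (N := 0) (by simpa using hb0)
  · simp only [hU, tsum_mul_pow_zero, hp0, zero_mul, zero_lt_one]

/-- For every real w with w ≥ x_V/x_U there exists a unique x₁(w) in
(0, x_V/w) such that U(x₁(w))·V(w·x₁(w)) = 1; moreover this solution satisfies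
x₁(w) < x_U. -/
theorem stmt_0
    (p b : ℕ → ℝ)
    (hp : ∀ n, 0 ≤ p n) (hp0 : p 0 = 0)
    (hb : ∀ n, 0 ≤ b n) (hb0 : 0 < b 0)
    (hpN : ∃ N, 1 ≤ N ∧ 0 < p N) (hbM : ∃ M, 1 ≤ M ∧ 0 < b M)
    (U V : ℝ → ℝ)
    (hU : ∀ x, U x = ∑' n, p n * x ^ n)
    (hV : ∀ x, V x = ∑' n, b n * x ^ n)
    (xU xV : ℝ) (hxU0 : 0 < xU) (hxUV : xU < xV) (hxV1 : xV ≤ 1)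
    (hUconv : ∀ x : ℝ, 0 ≤ x → x < xU → Summable fun n => p n * x ^ n)
    (hUdiv : ∀ x : ℝ, xU < x → ¬ Summable fun n => p n * x ^ n)
    (hVconv : ∀ x : ℝ, 0 ≤ x → x < xV → Summable fun n => b n * x ^ n)
    (hVdiv : ∀ x : ℝ, xV < x → ¬ Summable fun n => b n * x ^ n)
    (hVinf : Filter.Tendsto V (𝓝[<] xV) Filter.atTop)
    (w : ℝ) (hw : xV / xU ≤ w) :
    (∃! x : ℝ, x ∈ Set.Ioo 0 (xV / w) ∧ U x * V (w * x) = 1) ∧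
      (∀ x : ℝ, x ∈ Set.Ioo 0 (xV / w) → U x * V (w * x) = 1 → x < xU) :=
  stmt_0_general p b hp hp0 hb hb0 hpN U V hU hV xU xV hxU0 hxUV hUconv hVconv hVinf w hw
end

section
/- If U(x) → ∞ as x → x_U⁻, then for every real w with 1 ≤ w < x_V/x_U there exists a unique x₁(w) in the open interval (0, x_U) such that U(x₁(w))·V(w·x₁(w)) = 1. -/
open Filter Topology Set

lemma series_contOn (q : ℕ → ℝ) (hq : ∀ n, 0 ≤ q n) (r : ℝ)
    (hr : Summable fun n => q n * r ^ n) :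
    ContinuousOn (fun x : ℝ => ∑' n, q n * x ^ n) (Set.Icc 0 r) := by
  apply continuousOn_tsum (u := fun n => q n * r ^ n)
  · intro n; exact (continuous_const.mul (continuous_pow n)).continuousOn
  · exact hr
  · intro n x hx
    rw [Real.norm_eq_abs, abs_mul, abs_of_nonneg (hq n), abs_pow, abs_of_nonneg hx.1]
    exact mul_le_mul_of_nonneg_left (pow_le_pow_left₀ hx.1 hx.2 n) (hq n)

/-- If U(x) → ∞ as x → x_U⁻, then for every real w with
1 ≤ w < x_V/x_U there exists a unique x₁(w) ∈ (0, x_U) with U(x₁(w))·V(w·x₁(w)) = 1. -/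
theorem stmt_1
    (p b : ℕ → ℝ)
    (hp : ∀ n, 0 ≤ p n) (hp0 : p 0 = 0)
    (hb : ∀ n, 0 ≤ b n) (hb0 : 0 < b 0)
    (hpN : ∃ N, 1 ≤ N ∧ 0 < p N) (hbM : ∃ M, 1 ≤ M ∧ 0 < b M)
    (U V : ℝ → ℝ)
    (hU : ∀ x, U x = ∑' n, p n * x ^ n)
    (hV : ∀ x, V x = ∑' n, b n * x ^ n)
    (xU xV : ℝ) (hxU0 : 0 < xU) (hxUV : xU < xV) (hxV1 : xV ≤ 1)
    (hUconv : ∀ x : ℝ, 0 ≤ x → x < xU → Summable fun n => p n * x ^ n)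
    (hUdiv : ∀ x : ℝ, xU < x → ¬ Summable fun n => p n * x ^ n)
    (hVconv : ∀ x : ℝ, 0 ≤ x → x < xV → Summable fun n => b n * x ^ n)
    (hVdiv : ∀ x : ℝ, xV < x → ¬ Summable fun n => b n * x ^ n)
    (hVinf : Filter.Tendsto V (𝓝[<] xV) Filter.atTop)
    (hUinf : Filter.Tendsto U (𝓝[<] xU) Filter.atTop)
    (w : ℝ) (hw1 : 1 ≤ w) (hw2 : w < xV / xU) :
    ∃! x : ℝ, x ∈ Set.Ioo 0 xU ∧ U x * V (w * x) = 1 := by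
  obtain ⟨N, hN1, hpN'⟩ := hpN
  have hw0 : (0:ℝ) < w := lt_of_lt_of_le one_pos hw1
  have hwxU : w * xU < xV := (lt_div_iff₀ hxU0).mp hw2
  have hUnonneg : ∀ x : ℝ, 0 ≤ x → 0 ≤ U x := by
    intro x hx
    rw [hU]
    exact tsum_nonneg fun n => mul_nonneg (hp n) (pow_nonneg hx n)
  have hU0 : U 0 = 0 := by
    rw [hU]
    convert tsum_zero with n
    rcases n with _ | n
    · simp [hp0]
    · simp
  have hVb0 : ∀ y : ℝ, 0 ≤ y → y < xV → b 0 ≤ V y := by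
    intro y hy hy'
    rw [hV]
    have := Summable.le_tsum (hVconv y hy hy') 0
      (fun n _ => mul_nonneg (hb n) (pow_nonneg hy n))
    simpa using this
  have hUmono : ∀ x y : ℝ, 0 ≤ x → x < y → y < xU → U x < U y := by
    intro x y hx hxy hy
    rw [hU, hU]
    refine Summable.tsum_lt_tsum (i := N) ?_ ?_ (hUconv x hx (hxy.trans hy))
      (hUconv y (hx.trans hxy.le) hy)
    · intro n
      exact mul_le_mul_of_nonneg_left (pow_le_pow_left₀ hx hxy.le n) (hp n)
    · exact mul_lt_mul_of_pos_left
        (pow_lt_pow_left₀ hxy hx (Nat.one_le_iff_ne_zero.mp hN1)) hpN'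
  have hVmono : ∀ x y : ℝ, 0 ≤ x → x ≤ y → y < xV → V x ≤ V y := by
    intro x y hx hxy hy
    rw [hV, hV]
    refine Summable.tsum_le_tsum ?_ (hVconv x hx (lt_of_le_of_lt hxy hy)) (hVconv y (hx.trans hxy) hy)
    intro n
    exact mul_le_mul_of_nonneg_left (pow_le_pow_left₀ hx hxy n) (hb n)
  -- strict monotonicity of F(x) = U x * V (w x) on [0, xU)
  have hFmono : ∀ x y : ℝ, 0 ≤ x → x < y → y < xU → U x * V (w * x) < U y * V (w * y) := by
    intro x y hx hxy hy
    have hwy : w * y < xV :=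
      lt_of_lt_of_le ((mul_lt_mul_iff_right₀ hw0).mpr hy) (le_of_lt hwxU)
    have h2 : V (w * x) ≤ V (w * y) := by
      refine hVmono _ _ (mul_nonneg hw0.le hx) ?_ hwy
      exact mul_le_mul_of_nonneg_left (hxy.le) hw0.le
    have hVy : 0 < V (w * y) :=
      lt_of_lt_of_le hb0 (hVb0 _ (mul_nonneg hw0.le (hx.trans hxy.le)) hwy)
    calc U x * V (w * x) ≤ U x * V (w * y) :=
          mul_le_mul_of_nonneg_left h2 (hUnonneg x hx)
      _ < U y * V (w * y) := by
          exact mul_lt_mul_of_pos_right (hUmono x y hx hxy hy) hVy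
  -- pick c ∈ (0, xU) with 1/b0 < U c
  have hev : ∀ᶠ x in 𝓝[<] xU, 1 / b 0 < U x ∧ x ∈ Set.Ioo 0 xU := by
    have h1 : ∀ᶠ x in 𝓝[<] xU, 1 / b 0 < U x :=
      hUinf.eventually (eventually_gt_atTop _)
    have h2 : Set.Ioo 0 xU ∈ 𝓝[<] xU :=
      Ioo_mem_nhdsLT_of_mem ⟨hxU0, le_refl _⟩
    exact h1.and (eventually_of_mem h2 fun x hx => hx)
  obtain ⟨c, hc1, hc2⟩ := hev.exists
  have hc0 : 0 < c := hc2.1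
  have hcU : c < xU := hc2.2
  have hwc : w * c < xV := lt_of_lt_of_le ((mul_lt_mul_iff_right₀ hw0).mpr hcU) hwxU.le
  have hFc : 1 < U c * V (w * c) := by
    have hVc : b 0 ≤ V (w * c) := hVb0 _ (mul_nonneg hw0.le hc0.le) hwc
    calc (1:ℝ) = 1 / b 0 * b 0 := by field_simp
      _ < U c * V (w * c) :=
        mul_lt_mul hc1 hVc hb0 (hUnonneg c hc0.le)
  -- continuity of F on [0, c]
  have hFcont : ContinuousOn (fun x => U x * V (w * x)) (Set.Icc 0 c) := by
    have hUc : ContinuousOn U (Set.Icc 0 c) := by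
      refine ContinuousOn.congr (series_contOn p hp c (hUconv c hc0.le hcU)) ?_
      intro x _; exact hU x
    have hVc : ContinuousOn (fun x => V (w * x)) (Set.Icc 0 c) := by
      have h1 : ContinuousOn (fun y : ℝ => ∑' n, b n * y ^ n) (Set.Icc 0 (w * c)) :=
        series_contOn b hb (w * c) (hVconv _ (mul_nonneg hw0.le hc0.le) hwc)
      have h2 : ContinuousOn (fun x : ℝ => w * x) (Set.Icc 0 c) :=
        (continuous_const.mul continuous_id).continuousOn
      have h3 := h1.comp h2 (fun x hx =>
        ⟨mul_nonneg hw0.le hx.1, mul_le_mul_of_nonneg_left hx.2 hw0.le⟩)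
      refine h3.congr fun x _ => ?_
      simp only [Function.comp]
      exact hV (w * x)
    exact hUc.mul hVc
  -- IVT
  have hmem : (1:ℝ) ∈ Set.Ioo (U 0 * V (w * 0)) (U c * V (w * c)) := by
    constructor
    · rw [hU0, zero_mul]; exact one_pos
    · exact hFc
  obtain ⟨x0, hx0, hx0eq0⟩ := intermediate_value_Ioo hc0.le hFcont hmem
  have hx0eq : U x0 * V (w * x0) = 1 := hx0eq0
  refine ⟨x0, ⟨⟨hx0.1, hx0.2.trans hcU⟩, hx0eq⟩, ?_⟩
  rintro y ⟨⟨hy0, hyU⟩, hyeq⟩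
  by_contra hne
  rcases lt_or_gt_of_ne hne with h | h
  · have := hFmono y x0 hy0.le h (hx0.2.trans hcU)
    rw [hyeq, hx0eq] at this
    exact lt_irrefl 1 this
  · have := hFmono x0 y hx0.1.le h hyU
    rw [hyeq, hx0eq] at this
    exact lt_irrefl 1 this
end

section
/- If U(x_U⁻) < ∞ and U(x_U⁻)·V(x_U) ≥ 1, then for every real w with 1 < w < x_V/x_U there exists a unique x₁(w) in the open interval (0, x_U) such that U(x₁(w))·V(w·x₁(w)) = 1. -/
open Filter Topology Set

private lemma tsum_pow_le (q : ℕ → ℝ) (hq : ∀ n, 0 ≤ q n) {x y : ℝ}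
    (hx : 0 ≤ x) (hxy : x ≤ y) (hsy : Summable fun n => q n * y ^ n) :
    (∑' n, q n * x ^ n) ≤ ∑' n, q n * y ^ n := by
  have hle : ∀ n, q n * x ^ n ≤ q n * y ^ n := fun n =>
    mul_le_mul_of_nonneg_left (pow_le_pow_left₀ hx hxy n) (hq n)
  have hsx : Summable fun n => q n * x ^ n :=
    hsy.of_nonneg_of_le (fun n => mul_nonneg (hq n) (pow_nonneg hx n)) hle
  exact Summable.tsum_le_tsum hle hsx hsy

private lemma tsum_pow_lt (q : ℕ → ℝ) (hq : ∀ n, 0 ≤ q n) {N : ℕ} (hN : 1 ≤ N)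
    (hqN : 0 < q N) {x y : ℝ} (hx : 0 ≤ x) (hxy : x < y)
    (hsy : Summable fun n => q n * y ^ n) :
    (∑' n, q n * x ^ n) < ∑' n, q n * y ^ n := by
  have hle : ∀ n, q n * x ^ n ≤ q n * y ^ n := fun n =>
    mul_le_mul_of_nonneg_left (pow_le_pow_left₀ hx hxy.le n) (hq n)
  have hsx : Summable fun n => q n * x ^ n :=
    hsy.of_nonneg_of_le (fun n => mul_nonneg (hq n) (pow_nonneg hx n)) hle
  exact Summable.tsum_lt_tsum hle
    (mul_lt_mul_of_pos_left (pow_lt_pow_left₀ hxy hx (by omega)) hqN) hsx hsy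

private lemma le_tsum_pow (q : ℕ → ℝ) (hq : ∀ n, 0 ≤ q n) {x : ℝ} (hx : 0 ≤ x)
    (hs : Summable fun n => q n * x ^ n) (k : ℕ) :
    q k * x ^ k ≤ ∑' n, q n * x ^ n :=
  Summable.le_tsum hs k (fun j _ => mul_nonneg (hq j) (pow_nonneg hx j))

private lemma contOn_tsum_pow (q : ℕ → ℝ) (hq : ∀ n, 0 ≤ q n) {c : ℝ} (hc : 0 ≤ c)
    (hs : Summable fun n => q n * c ^ n) :
    ContinuousOn (fun x => ∑' n, q n * x ^ n) (Icc 0 c) := by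
  refine continuousOn_tsum (fun n => (continuous_const.mul (continuous_pow n)).continuousOn) hs ?_
  intro n x hx
  rw [Real.norm_eq_abs, abs_of_nonneg (mul_nonneg (hq n) (pow_nonneg hx.1 n))]
  exact mul_le_mul_of_nonneg_left (pow_le_pow_left₀ hx.1 hx.2 n) (hq n)

/-- If U(x_U⁻) < ∞ and U(x_U⁻)·V(x_U) ≥ 1, then for every real w with
1 < w < x_V/x_U there exists a unique x₁(w) ∈ (0, x_U) with U(x₁(w))·V(w·x₁(w)) = 1. -/
theorem stmt_2
    (p b : ℕ → ℝ)
    (hp : ∀ n, 0 ≤ p n) (hp0 : p 0 = 0)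
    (hb : ∀ n, 0 ≤ b n) (hb0 : 0 < b 0)
    (hpN : ∃ N, 1 ≤ N ∧ 0 < p N) (hbM : ∃ M, 1 ≤ M ∧ 0 < b M)
    (U V : ℝ → ℝ)
    (hU : ∀ x, U x = ∑' n, p n * x ^ n)
    (hV : ∀ x, V x = ∑' n, b n * x ^ n)
    (xU xV : ℝ) (hxU0 : 0 < xU) (hxUV : xU < xV) (hxV1 : xV ≤ 1)
    (hUconv : ∀ x : ℝ, 0 ≤ x → x < xU → Summable fun n => p n * x ^ n)
    (hUdiv : ∀ x : ℝ, xU < x → ¬ Summable fun n => p n * x ^ n)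
    (hVconv : ∀ x : ℝ, 0 ≤ x → x < xV → Summable fun n => b n * x ^ n)
    (hVdiv : ∀ x : ℝ, xV < x → ¬ Summable fun n => b n * x ^ n)
    (hVinf : Filter.Tendsto V (𝓝[<] xV) Filter.atTop)
    (L : ℝ) (hL : Filter.Tendsto U (𝓝[<] xU) (𝓝 L))
    (hL1 : 1 ≤ L * V xU)
    (w : ℝ) (hw1 : 1 < w) (hw2 : w < xV / xU) :
    ∃! x : ℝ, x ∈ Set.Ioo 0 xU ∧ U x * V (w * x) = 1 := by
  obtain ⟨N, hN1, hpN⟩ := hpN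
  obtain ⟨M, hM1, hbM⟩ := hbM
  have hw0 : (0:ℝ) < w := lt_trans one_pos hw1
  have hwxU : xU < w * xU := (lt_mul_iff_one_lt_left hxU0).2 hw1
  have hwxUV : w * xU < xV := (lt_div_iff₀ hxU0).1 hw2
  -- L is positive
  set x0 : ℝ := xU / 2 with hx0def
  have hx00 : 0 < x0 := by positivity
  have hx0U : x0 < xU := by rw [hx0def]; linarith
  have hUx0pos : 0 < U x0 := by
    rw [hU]
    exact lt_of_lt_of_le (by positivity) (le_tsum_pow p hp hx00.le (hUconv x0 hx00.le hx0U) N)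
  have hLx0 : U x0 ≤ L := by
    refine ge_of_tendsto hL ?_
    filter_upwards [Ioo_mem_nhdsLT_of_mem (⟨hx0U, le_refl xU⟩ : xU ∈ Ioc x0 xU)] with y hy
    rw [hU x0, hU y]
    exact tsum_pow_le p hp hx00.le hy.1.le (hUconv y (le_trans hx00.le hy.1.le) hy.2)
  have hLpos : 0 < L := lt_of_lt_of_le hUx0pos hLx0
  -- V xU < V (w xU)
  have hVlt : V xU < V (w * xU) := by
    rw [hV, hV]
    exact tsum_pow_lt b hb hM1 hbM hxU0.le hwxU (hVconv _ (mul_nonneg hw0.le hxU0.le) hwxUV)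
  have hgt : (1:ℝ) < L * V (w * xU) :=
    lt_of_le_of_lt hL1 (mul_lt_mul_of_pos_left hVlt hLpos)
  -- continuity of V at w * xU
  set c' : ℝ := (w * xU + xV) / 2 with hc'def
  have hc'0 : 0 < c' := by have := mul_pos hw0 hxU0; rw [hc'def]; linarith
  have hc'1 : w * xU < c' := by rw [hc'def]; linarith
  have hc'2 : c' < xV := by rw [hc'def]; linarith
  have hVe : V = fun x => ∑' n, b n * x ^ n := funext hV
  have hVcontAt : ContinuousAt V (w * xU) := by
    rw [hVe]
    exact (contOn_tsum_pow b hb hc'0.le (hVconv c' hc'0.le hc'2)).continuousAt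
      (Icc_mem_nhds (mul_pos hw0 hxU0) hc'1)
  have hmulT : Tendsto (fun x => w * x) (𝓝[<] xU) (𝓝 (w * xU)) :=
    ((continuous_const.mul continuous_id).tendsto xU).mono_left nhdsWithin_le_nhds
  have htendG : Tendsto (fun x => V (w * x)) (𝓝[<] xU) (𝓝 (V (w * xU))) :=
    hVcontAt.tendsto.comp hmulT
  have htendF : Tendsto (fun x => U x * V (w * x)) (𝓝[<] xU) (𝓝 (L * V (w * xU))) :=
    hL.mul htendG
  -- find c ∈ (0, xU) with F c > 1
  have hev1 : ∀ᶠ x in 𝓝[<] xU, 1 < U x * V (w * x) :=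
    htendF.eventually (eventually_gt_nhds hgt)
  have hev2 : ∀ᶠ x in 𝓝[<] xU, x ∈ Ioo 0 xU :=
    Ioo_mem_nhdsLT_of_mem (⟨hxU0, le_refl xU⟩ : xU ∈ Ioc 0 xU)
  obtain ⟨c, hc1, hcIoo⟩ := (hev1.and hev2).exists
  have hc0 : 0 < c := hcIoo.1
  have hcU : c < xU := hcIoo.2
  -- F 0 = 0
  have hU0 : U 0 = 0 := by
    rw [hU]
    have hz : ∀ n : ℕ, p n * (0:ℝ) ^ n = 0 := by
      intro n
      cases n with
      | zero => simp [hp0]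
      | succ k => simp
    simp only [hz, tsum_zero]
  -- continuity of F on [0, c]
  have hUe : U = fun x => ∑' n, p n * x ^ n := funext hU
  have hUc : ContinuousOn U (Icc 0 c) := by
    rw [hUe]
    exact contOn_tsum_pow p hp hc0.le (hUconv c hc0.le hcU)
  have hwc : w * c < xV := lt_trans (mul_lt_mul_of_pos_left hcU hw0) hwxUV
  have hGc : ContinuousOn (fun x => V (w * x)) (Icc 0 c) := by
    have h1 : ContinuousOn V (Icc 0 (w * c)) := by
      rw [hVe]
      exact contOn_tsum_pow b hb (by positivity) (hVconv _ (by positivity) hwc)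
    exact h1.comp ((continuous_const.mul continuous_id).continuousOn)
      (fun x hx => ⟨mul_nonneg hw0.le hx.1, mul_le_mul_of_nonneg_left hx.2 hw0.le⟩)
  have hFc : ContinuousOn (fun x => U x * V (w * x)) (Icc 0 c) := hUc.mul hGc
  have hmem : (1:ℝ) ∈ Ioo (U 0 * V (w * 0)) (U c * V (w * c)) := by
    constructor
    · rw [hU0, zero_mul]; exact one_pos
    · exact hc1
  obtain ⟨x, hxIoo, hFx0⟩ := intermediate_value_Ioo hc0.le hFc hmem
  have hFx : U x * V (w * x) = 1 := hFx0
  -- strict monotonicity on (0, xU)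
  have hstrict : ∀ y z, y ∈ Ioo 0 xU → z ∈ Ioo 0 xU → y < z →
      U y * V (w * y) < U z * V (w * z) := by
    intro y z hy hz hyz
    have hwzV : w * z < xV := lt_trans (mul_lt_mul_of_pos_left hz.2 hw0) hwxUV
    have hwyV : w * y < xV := lt_trans (mul_lt_mul_of_pos_left hy.2 hw0) hwxUV
    have hsUz := hUconv z (le_trans hy.1.le hyz.le) hz.2
    have hsVz := hVconv (w * z) (mul_nonneg hw0.le (le_trans hy.1.le hyz.le)) hwzV
    have hsVy := hVconv (w * y) (mul_nonneg hw0.le hy.1.le) hwyV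
    have h1 : U y < U z := by
      rw [hU, hU]; exact tsum_pow_lt p hp hN1 hpN hy.1.le hyz hsUz
    have h2 : V (w * y) ≤ V (w * z) := by
      rw [hV, hV]
      exact tsum_pow_le b hb (mul_nonneg hw0.le hy.1.le)
        (mul_le_mul_of_nonneg_left hyz.le hw0.le) hsVz
    have h3 : 0 < V (w * y) := by
      rw [hV]
      have := le_tsum_pow b hb (mul_nonneg hw0.le hy.1.le) hsVy 0
      simp only [pow_zero, mul_one] at this
      exact lt_of_lt_of_le hb0 this
    have h4 : 0 ≤ U z := by
      rw [hU]; exact tsum_nonneg fun n => mul_nonneg (hp n) (pow_nonneg (le_trans hy.1.le hyz.le) n)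
    exact mul_lt_mul h1 h2 h3 h4
  have hxmem : x ∈ Ioo 0 xU := ⟨hxIoo.1, lt_trans hxIoo.2 hcU⟩
  refine ⟨x, ⟨hxmem, hFx⟩, ?_⟩
  rintro y ⟨hymem, hFy⟩
  rcases lt_trichotomy y x with h | h | h
  · exfalso
    have := hstrict y x hymem hxmem h
    rw [hFy, hFx] at this
    exact lt_irrefl _ this
  · exact h
  · exfalso
    have := hstrict x y hxmem hymem h
    rw [hFy, hFx] at this
    exact lt_irrefl _ this
end

section
/- If U(x_U⁻) < ∞ and U(x_U⁻)·V(x_U) < 1, then: (i) there exists a unique w_c in the open interval (1, x_V/x_U) with U(x_U⁻)·V(w_c·x_U) = 1; (ii) for every w with w_c < w < x_V/x_U there exists a unique x₁(w) in (0, x_U) with U(x₁(w))·V(w·x₁(w)) = 1; and (iii) for every w with 1 ≤ w < w_c there is no x ∈ (0, x_U) with U(x)·V(w·x) = 1. -/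
/-!
On `[0, x_U]` the loop series `U` is continuous and strictly increasing from `U 0 = 0` up to
`L = U(x_U⁻)`: by monotone convergence the nonnegative series converges at `x_U` itself. The path
series `V` is positive, continuous and strictly increasing on `[0, x_V)` and blows up at `x_V`.
Hence `y ↦ L V(y)` crosses `1` exactly once on `(x_U, x_V)`, at `w_c x_U`. For `w > w_c` the
strictly increasing map `x ↦ U(x) V(w x)` goes from `0` to `L V(w x_U) > 1` on `[0, x_U]` and
crosses `1` exactly once, while for `w < w_c` it stays below `L V(w_c x_U) = 1`.
-/

open Filter Topology Set

section NonnegPowerSeries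

variable {c : ℕ → ℝ} {x y r L : ℝ}

lemma summable_mul_pow_of_le (hc : ∀ n, 0 ≤ c n) (hx : 0 ≤ x) (hxy : x ≤ y)
    (hy : Summable fun n => c n * y ^ n) : Summable fun n => c n * x ^ n :=
  hy.of_nonneg_of_le (fun n => mul_nonneg (hc n) (pow_nonneg hx n))
    (fun n => mul_le_mul_of_nonneg_left (pow_le_pow_left₀ hx hxy n) (hc n))

lemma tsum_mul_zero_pow (c : ℕ → ℝ) : ∑' n, c n * 0 ^ n = c 0 := by
  rw [tsum_eq_single 0 fun n hn => by simp [zero_pow hn]]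
  simp

lemma strictMonoOn_tsum_mul_pow_s3 {s : Set ℝ} (hc : ∀ n, 0 ≤ c n) {N : ℕ} (hN : 1 ≤ N)
    (hcN : 0 < c N) (hs : s ⊆ Ici 0) (hsum : ∀ x ∈ s, Summable fun n => c n * x ^ n) :
    StrictMonoOn (fun x => ∑' n, c n * x ^ n) s := by
  intro x hx y hy hxy
  have hx0 : 0 ≤ x := hs hx
  exact Summable.tsum_lt_tsum (i := N)
    (fun n => mul_le_mul_of_nonneg_left (pow_le_pow_left₀ hx0 hxy.le n) (hc n))
    (mul_lt_mul_of_pos_left (pow_lt_pow_left₀ hxy hx0 (by omega)) hcN)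
    (hsum x hx) (hsum y hy)

lemma continuousOn_tsum_mul_pow_Icc (hc : ∀ n, 0 ≤ c n)
    (hr : Summable fun n => c n * r ^ n) :
    ContinuousOn (fun x => ∑' n, c n * x ^ n) (Icc 0 r) := by
  refine continuousOn_tsum (fun n => (continuous_const.mul (continuous_pow n)).continuousOn) hr
    fun n x hx => ?_
  rw [Real.norm_eq_abs, abs_mul, abs_of_nonneg (hc n), abs_pow, abs_of_nonneg hx.1]
  exact mul_le_mul_of_nonneg_left (pow_le_pow_left₀ hx.1 hx.2 n) (hc n)

lemma continuousOn_tsum_mul_pow_Ico (hc : ∀ n, 0 ≤ c n)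
    (hsum : ∀ x ∈ Ico 0 r, Summable fun n => c n * x ^ n) :
    ContinuousOn (fun x => ∑' n, c n * x ^ n) (Ico 0 r) := by
  refine continuousOn_of_locally_continuousOn fun x hx => ?_
  obtain ⟨s, hxs, hsr⟩ := exists_between hx.2
  exact ⟨Iio s, isOpen_Iio, hxs, (continuousOn_tsum_mul_pow_Icc hc
    (hsum s ⟨hx.1.trans hxs.le, hsr⟩)).mono fun y hy => ⟨hy.1.1, hy.2.le⟩⟩

lemma hasSum_mul_pow_of_tendsto_nhdsLT (hc : ∀ n, 0 ≤ c n) (hr : 0 < r)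
    (hsum : ∀ x ∈ Ioo 0 r, Summable fun n => c n * x ^ n)
    (hL : Tendsto (fun x => ∑' n, c n * x ^ n) (𝓝[<] r) (𝓝 L)) :
    HasSum (fun n => c n * r ^ n) L := by
  have hnonneg : ∀ n, 0 ≤ c n * r ^ n := fun n => mul_nonneg (hc n) (pow_nonneg hr.le n)
  have hnear : ∀ᶠ x in 𝓝[<] r, x ∈ Ioo 0 r := Ioo_mem_nhdsLT hr
  have hpartial : ∀ k, ∑ n ∈ Finset.range k, c n * r ^ n ≤ L := fun k => by
    refine le_of_tendsto_of_tendsto ((continuous_finsetSum _ fun n _ =>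
      continuous_const.mul (continuous_pow n)).tendsto r |>.mono_left nhdsWithin_le_nhds) hL ?_
    filter_upwards [hnear] with x hx
    exact (hsum x hx).sum_le_tsum _ fun n _ => mul_nonneg (hc n) (pow_nonneg hx.1.le n)
  have hr_sum := summable_of_sum_range_le hnonneg hpartial
  have hle : L ≤ ∑' n, c n * r ^ n := by
    refine le_of_tendsto hL ?_
    filter_upwards [hnear] with x hx
    exact (summable_mul_pow_of_le hc hx.1.le hx.2.le hr_sum).tsum_le_tsum
      (fun n => mul_le_mul_of_nonneg_left (pow_le_pow_left₀ hx.1.le hx.2.le n) (hc n)) hr_sum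
  exact (le_antisymm (Real.tsum_le_of_sum_range_le hnonneg hpartial) hle) ▸ hr_sum.hasSum

end NonnegPowerSeries

section Crossing

variable {f g : ℝ → ℝ} {s : Set ℝ} {a b t : ℝ}

lemma StrictMonoOn.mul_monotoneOn (hf : StrictMonoOn f s) (hg : MonotoneOn g s)
    (hf0 : ∀ x ∈ s, 0 ≤ f x) (hg0 : ∀ x ∈ s, 0 < g x) :
    StrictMonoOn (fun x => f x * g x) s := fun x hx y hy hxy =>
  calc f x * g x ≤ f x * g y := mul_le_mul_of_nonneg_left (hg hx hy hxy.le) (hf0 x hx)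
    _ < f y * g y := mul_lt_mul_of_pos_right (hf hx hy hxy) (hg0 y hy)

lemma existsUnique_mem_Ioo_eq_of_strictMonoOn (hab : a ≤ b) (hf : ContinuousOn f (Icc a b))
    (hmono : StrictMonoOn f (Icc a b)) (ha : f a < t) (hb : t < f b) :
    ∃! x, x ∈ Ioo a b ∧ f x = t := by
  obtain ⟨x, hx, hfx⟩ := intermediate_value_Ioo hab hf ⟨ha, hb⟩
  exact ⟨x, ⟨hx, hfx⟩, fun y ⟨hy, hfy⟩ =>
    hmono.injOn (Ioo_subset_Icc_self hy) (Ioo_subset_Icc_self hx) (hfy.trans hfx.symm)⟩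

lemma existsUnique_mem_Ioo_eq_of_tendsto_atTop (hab : a < b) (hf : ContinuousOn f (Ico a b))
    (hmono : StrictMonoOn f (Ico a b)) (hlim : Tendsto f (𝓝[<] b) atTop) (ha : f a < t) :
    ∃! x, x ∈ Ioo a b ∧ f x = t := by
  obtain ⟨b', hb't, hb'⟩ := ((hlim.eventually_gt_atTop t).and (Ioo_mem_nhdsLT hab)).exists
  have hsub : Icc a b' ⊆ Ico a b := Icc_subset_Ico_right hb'.2
  obtain ⟨x, ⟨hx, hfx⟩, -⟩ :=
    existsUnique_mem_Ioo_eq_of_strictMonoOn hb'.1.le (hf.mono hsub) (hmono.mono hsub) ha hb't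
  exact ⟨x, ⟨⟨hx.1, hx.2.trans hb'.2⟩, hfx⟩, fun y ⟨hy, hfy⟩ =>
    hmono.injOn (Ioo_subset_Ico_self hy) (hsub (Ioo_subset_Icc_self hx)) (hfy.trans hfx.symm)⟩

end Crossing

namespace PolandScheraga

variable {U V : ℝ → ℝ} {xU xV : ℝ}

lemma mem_Ioo_one_div_iff {w : ℝ} (hxU : 0 < xU) :
    w ∈ Ioo 1 (xV / xU) ↔ w * xU ∈ Ioo xU xV := by
  simp only [mem_Ioo, lt_div_iff₀ hxU, ← lt_mul_iff_one_lt_left hxU]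

lemma nonneg_of_mem_Icc (hU : StrictMonoOn U (Icc 0 xU)) (hU0 : U 0 = 0) {x : ℝ}
    (hx : x ∈ Icc 0 xU) : 0 ≤ U x :=
  hU0 ▸ hU.monotoneOn ⟨le_rfl, hx.1.trans hx.2⟩ hx hx.1

lemma pos_of_mem_Ico (hV : StrictMonoOn V (Ico 0 xV)) (hV0 : 0 < V 0) {y : ℝ}
    (hy : y ∈ Ico 0 xV) : 0 < V y :=
  hV0.trans_le (hV.monotoneOn ⟨le_rfl, hy.1.trans_lt hy.2⟩ hy hy.1)

lemma existsUnique_critical (hxU : 0 < xU) (hxUV : xU < xV) (hUpos : 0 < U xU)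
    (hV : StrictMonoOn V (Ico 0 xV)) (hVc : ContinuousOn V (Ico 0 xV))
    (hVinf : Tendsto V (𝓝[<] xV) atTop) (hsub : U xU * V xU < 1) :
    ∃! wc, wc ∈ Ioo 1 (xV / xU) ∧ U xU * V (wc * xU) = 1 := by
  have hIco : Ico xU xV ⊆ Ico 0 xV := Ico_subset_Ico_left hxU.le
  obtain ⟨y, ⟨hy, hVy⟩, huniq⟩ := existsUnique_mem_Ioo_eq_of_tendsto_atTop
    (f := (U xU * V ·)) hxUV (continuousOn_const.mul (hVc.mono hIco))
    (fun x hx y hy hxy => mul_lt_mul_of_pos_left (hV (hIco hx) (hIco hy) hxy) hUpos)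
    (hVinf.const_mul_atTop hUpos) hsub
  refine ⟨y / xU, ⟨?_, ?_⟩, fun w ⟨hw, hVw⟩ => ?_⟩
  · rwa [mem_Ioo_one_div_iff hxU, div_mul_cancel₀ y hxU.ne']
  · rwa [div_mul_cancel₀ y hxU.ne']
  · rw [eq_div_iff hxU.ne']
    exact huniq _ ⟨(mem_Ioo_one_div_iff hxU).1 hw, hVw⟩

variable (hU : StrictMonoOn U (Icc 0 xU)) (hU0 : U 0 = 0)
  (hV : StrictMonoOn V (Ico 0 xV)) (hV0 : 0 < V 0)
include hU hU0 hV hV0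

lemma existsUnique_root (hUc : ContinuousOn U (Icc 0 xU)) (hVc : ContinuousOn V (Ico 0 xV))
    (hxU : 0 < xU) {w : ℝ} (hw : 0 < w) (hwV : w * xU < xV) (hsup : 1 < U xU * V (w * xU)) :
    ∃! x, x ∈ Ioo 0 xU ∧ U x * V (w * x) = 1 := by
  have hmaps : MapsTo (w * ·) (Icc 0 xU) (Ico 0 xV) := fun x hx =>
    ⟨mul_nonneg hw.le hx.1, (mul_le_mul_of_nonneg_left hx.2 hw.le).trans_lt hwV⟩
  have hVw : MonotoneOn (fun x => V (w * x)) (Icc 0 xU) := fun x hx y hy hxy =>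
    hV.monotoneOn (hmaps hx) (hmaps hy) (mul_le_mul_of_nonneg_left hxy hw.le)
  refine existsUnique_mem_Ioo_eq_of_strictMonoOn hxU.le
    (hUc.mul (hVc.comp (continuousOn_const.mul continuousOn_id) hmaps))
    (hU.mul_monotoneOn hVw (fun _ hx => nonneg_of_mem_Icc hU hU0 hx)
      fun _ hx => pos_of_mem_Ico hV hV0 (hmaps hx))
    (by simp [hU0]) hsup

lemma ne_one_of_lt_critical {w wc : ℝ} (hw : 0 ≤ w) (hwwc : w < wc) (hwcV : wc * xU < xV)
    (hcrit : U xU * V (wc * xU) = 1) {x : ℝ} (hx : x ∈ Ioo 0 xU) : U x * V (w * x) ≠ 1 := by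
  have hxU : 0 < xU := hx.1.trans hx.2
  have hwx : w * x < wc * xU :=
    (mul_le_mul_of_nonneg_left hx.2.le hw).trans_lt (mul_lt_mul_of_pos_right hwwc hxU)
  have hwx0 : w * x ∈ Ico 0 xV := ⟨mul_nonneg hw hx.1.le, hwx.trans hwcV⟩
  have hwcxU : wc * xU ∈ Ico 0 xV := ⟨hwx0.1.trans hwx.le, hwcV⟩
  refine ne_of_lt ?_
  calc U x * V (w * x) ≤ U x * V (wc * xU) :=
        mul_le_mul_of_nonneg_left (hV.monotoneOn hwx0 hwcxU hwx.le)
          (nonneg_of_mem_Icc hU hU0 (Ioo_subset_Icc_self hx))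
    _ < U xU * V (wc * xU) :=
        mul_lt_mul_of_pos_right (hU (Ioo_subset_Icc_self hx) ⟨hxU.le, le_rfl⟩ hx.2)
          (pos_of_mem_Ico hV hV0 hwcxU)
    _ = 1 := hcrit

theorem critical_crossing (hUc : ContinuousOn U (Icc 0 xU)) (hVc : ContinuousOn V (Ico 0 xV))
    (hxU : 0 < xU) (hxUV : xU < xV) (hVinf : Tendsto V (𝓝[<] xV) atTop)
    (hsub : U xU * V xU < 1) :
    ∃ wc : ℝ, (wc ∈ Ioo 1 (xV / xU) ∧ U xU * V (wc * xU) = 1) ∧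
      (∀ wc' : ℝ, wc' ∈ Ioo 1 (xV / xU) ∧ U xU * V (wc' * xU) = 1 → wc' = wc) ∧
      (∀ w : ℝ, wc < w → w < xV / xU →
        ∃! x : ℝ, x ∈ Ioo 0 xU ∧ U x * V (w * x) = 1) ∧
      (∀ w : ℝ, 1 ≤ w → w < wc → ∀ x ∈ Ioo 0 xU, U x * V (w * x) ≠ 1) := by
  have hUpos : 0 < U xU := hU0 ▸ hU ⟨le_rfl, hxU.le⟩ ⟨hxU.le, le_rfl⟩ hxU
  obtain ⟨wc, ⟨hwc, hcrit⟩, huniq⟩ := existsUnique_critical hxU hxUV hUpos hV hVc hVinf hsub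
  have hwcV : wc * xU < xV := ((mem_Ioo_one_div_iff hxU).1 hwc).2
  refine ⟨wc, ⟨hwc, hcrit⟩, huniq, fun w hwcw hwV => ?_,
    fun w hw hwwc x hx => ne_one_of_lt_critical hU hU0 hV hV0 (by linarith) hwwc hwcV hcrit hx⟩
  have hwc0 : 0 ≤ wc * xU := mul_nonneg (by linarith [hwc.1]) hxU.le
  have hwV' : w * xU < xV := (lt_div_iff₀ hxU).1 hwV
  have hwcw' : wc * xU < w * xU := mul_lt_mul_of_pos_right hwcw hxU
  refine existsUnique_root hU hU0 hV hV0 hUc hVc hxU (by linarith [hwc.1]) hwV' (hcrit ▸ ?_)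
  exact mul_lt_mul_of_pos_left (hV ⟨hwc0, hwcV⟩ ⟨hwc0.trans hwcw'.le, hwV'⟩ hwcw') hUpos

end PolandScheraga

theorem stmt_3_general
    (p b : ℕ → ℝ)
    (hp : ∀ n, 0 ≤ p n) (hp0 : p 0 = 0)
    (hb : ∀ n, 0 ≤ b n) (hb0 : 0 < b 0)
    (hpN : ∃ N, 1 ≤ N ∧ 0 < p N) (hbM : ∃ M, 1 ≤ M ∧ 0 < b M)
    (U V : ℝ → ℝ)
    (hU : ∀ x, U x = ∑' n, p n * x ^ n)
    (hV : ∀ x, V x = ∑' n, b n * x ^ n)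
    (xU xV : ℝ) (hxU0 : 0 < xU) (hxUV : xU < xV)
    (hUconv : ∀ x : ℝ, 0 ≤ x → x < xU → Summable fun n => p n * x ^ n)
    (hVconv : ∀ x : ℝ, 0 ≤ x → x < xV → Summable fun n => b n * x ^ n)
    (hVinf : Filter.Tendsto V (𝓝[<] xV) Filter.atTop)
    (L : ℝ) (hL : Filter.Tendsto U (𝓝[<] xU) (𝓝 L))
    (hL1 : L * V xU < 1) :
    ∃ wc : ℝ, (wc ∈ Set.Ioo 1 (xV / xU) ∧ L * V (wc * xU) = 1) ∧
      (∀ wc' : ℝ, wc' ∈ Set.Ioo 1 (xV / xU) ∧ L * V (wc' * xU) = 1 → wc' = wc) ∧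
      (∀ w : ℝ, wc < w → w < xV / xU →
        ∃! x : ℝ, x ∈ Set.Ioo 0 xU ∧ U x * V (w * x) = 1) ∧
      (∀ w : ℝ, 1 ≤ w → w < wc →
        ∀ x ∈ Set.Ioo 0 xU, U x * V (w * x) ≠ 1) := by
  obtain ⟨N, hN, hpN⟩ := hpN
  obtain ⟨M, hM, hbM⟩ := hbM
  obtain rfl : U = fun x => ∑' n, p n * x ^ n := funext hU
  obtain rfl : V = fun x => ∑' n, b n * x ^ n := funext hV
  have hsum := hasSum_mul_pow_of_tendsto_nhdsLT hp hxU0 (fun x hx => hUconv x hx.1.le hx.2) hL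
  obtain rfl := hsum.tsum_eq
  have hUsum : ∀ x ∈ Icc 0 xU, Summable fun n => p n * x ^ n :=
    fun x hx => summable_mul_pow_of_le hp hx.1 hx.2 hsum.summable
  have hVsum : ∀ x ∈ Ico 0 xV, Summable fun n => b n * x ^ n := fun x hx => hVconv x hx.1 hx.2
  exact PolandScheraga.critical_crossing
    (strictMonoOn_tsum_mul_pow_s3 hp hN hpN (fun _ hx => hx.1) hUsum)
    (by simp only [tsum_mul_zero_pow, hp0])
    (strictMonoOn_tsum_mul_pow_s3 hb hM hbM (fun _ hx => hx.1) hVsum)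
    (by simpa only [tsum_mul_zero_pow] using hb0)
    (continuousOn_tsum_mul_pow_Icc hp hsum.summable) (continuousOn_tsum_mul_pow_Ico hb hVsum)
    hxU0 hxUV hVinf hL1

/-- If U(x_U⁻) < ∞ and U(x_U⁻)·V(x_U) < 1, then (i) there is a unique
w_c ∈ (1, x_V/x_U) with U(x_U⁻)·V(w_c·x_U) = 1; (ii) for w_c < w < x_V/x_U there
is a unique x₁(w) ∈ (0, x_U) with U(x₁(w))·V(w·x₁(w)) = 1; (iii) for 1 ≤ w < w_c
there is no x ∈ (0, x_U) with U(x)·V(w·x) = 1. -/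
theorem stmt_3
    (p b : ℕ → ℝ)
    (hp : ∀ n, 0 ≤ p n) (hp0 : p 0 = 0)
    (hb : ∀ n, 0 ≤ b n) (hb0 : 0 < b 0)
    (hpN : ∃ N, 1 ≤ N ∧ 0 < p N) (hbM : ∃ M, 1 ≤ M ∧ 0 < b M)
    (U V : ℝ → ℝ)
    (hU : ∀ x, U x = ∑' n, p n * x ^ n)
    (hV : ∀ x, V x = ∑' n, b n * x ^ n)
    (xU xV : ℝ) (hxU0 : 0 < xU) (hxUV : xU < xV) (hxV1 : xV ≤ 1)
    (hUconv : ∀ x : ℝ, 0 ≤ x → x < xU → Summable fun n => p n * x ^ n)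
    (hUdiv : ∀ x : ℝ, xU < x → ¬ Summable fun n => p n * x ^ n)
    (hVconv : ∀ x : ℝ, 0 ≤ x → x < xV → Summable fun n => b n * x ^ n)
    (hVdiv : ∀ x : ℝ, xV < x → ¬ Summable fun n => b n * x ^ n)
    (hVinf : Filter.Tendsto V (𝓝[<] xV) Filter.atTop)
    (L : ℝ) (hL : Filter.Tendsto U (𝓝[<] xU) (𝓝 L))
    (hL1 : L * V xU < 1) :
    ∃ wc : ℝ, (wc ∈ Set.Ioo 1 (xV / xU) ∧ L * V (wc * xU) = 1) ∧
      (∀ wc' : ℝ, wc' ∈ Set.Ioo 1 (xV / xU) ∧ L * V (wc' * xU) = 1 → wc' = wc) ∧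
      (∀ w : ℝ, wc < w → w < xV / xU →
        ∃! x : ℝ, x ∈ Set.Ioo 0 xU ∧ U x * V (w * x) = 1) ∧
      (∀ w : ℝ, 1 ≤ w → w < wc →
        ∀ x ∈ Set.Ioo 0 xU, U x * V (w * x) ≠ 1) :=
  stmt_3_general p b hp hp0 hb hb0 hpN hbM U V hU hV xU xV hxU0 hxUV hUconv hVconv hVinf L hL hL1
end

section
/- Suppose 1 ≤ w < w', and suppose x ∈ (0, min(x_U, x_V/w)) and x' ∈ (0, min(x_U, x_V/w')) satisfy U(x)·V(w·x) = 1 and U(x')·V(w'·x') = 1. Then x' < x; that is, the solution x₁(w) of the critical equation U(x₁(w))·V(w·x₁(w)) = 1 is strictly decreasing in w. -/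
open Filter Topology Set

/-- The solution x₁(w) of the critical equation is strictly decreasing
in w: if 1 ≤ w < w' and x, x' solve the critical equations for w, w' respectively,
then x' < x. -/
theorem stmt_4
    (p b : ℕ → ℝ)
    (hp : ∀ n, 0 ≤ p n) (hp0 : p 0 = 0)
    (hb : ∀ n, 0 ≤ b n) (hb0 : 0 < b 0)
    (hpN : ∃ N, 1 ≤ N ∧ 0 < p N) (hbM : ∃ M, 1 ≤ M ∧ 0 < b M)
    (U V : ℝ → ℝ)
    (hU : ∀ x, U x = ∑' n, p n * x ^ n)
    (hV : ∀ x, V x = ∑' n, b n * x ^ n)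
    (xU xV : ℝ) (hxU0 : 0 < xU) (hxUV : xU < xV) (hxV1 : xV ≤ 1)
    (hUconv : ∀ x : ℝ, 0 ≤ x → x < xU → Summable fun n => p n * x ^ n)
    (hUdiv : ∀ x : ℝ, xU < x → ¬ Summable fun n => p n * x ^ n)
    (hVconv : ∀ x : ℝ, 0 ≤ x → x < xV → Summable fun n => b n * x ^ n)
    (hVdiv : ∀ x : ℝ, xV < x → ¬ Summable fun n => b n * x ^ n)
    (hVinf : Filter.Tendsto V (𝓝[<] xV) Filter.atTop)
    (w w' : ℝ) (hw1 : 1 ≤ w) (hww' : w < w')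
    (x x' : ℝ)
    (hx : x ∈ Set.Ioo 0 (min xU (xV / w)))
    (hx' : x' ∈ Set.Ioo 0 (min xU (xV / w')))
    (heq : U x * V (w * x) = 1)
    (heq' : U x' * V (w' * x') = 1) :
    x' < x := by
  by_contra hcon
  push_neg at hcon  -- x ≤ x'
  obtain ⟨hx0, hxlt⟩ := hx
  obtain ⟨hx'0, hx'lt⟩ := hx'
  obtain ⟨N, hN1, hpNpos⟩ := hpN
  obtain ⟨M, hM1, hbMpos⟩ := hbM
  have hw0 : 0 < w := lt_of_lt_of_le one_pos hw1
  have hw'0 : 0 < w' := hw0.trans hww'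
  have hxU' : x < xU := lt_of_lt_of_le hxlt (min_le_left _ _)
  have hx'U : x' < xU := lt_of_lt_of_le hx'lt (min_le_left _ _)
  have hwx : w * x < xV := by
    have := lt_of_lt_of_le hxlt (min_le_right _ _)
    calc w * x < w * (xV / w) := by nlinarith
    _ = xV := by field_simp
  have hw'x' : w' * x' < xV := by
    have := lt_of_lt_of_le hx'lt (min_le_right _ _)
    calc w' * x' < w' * (xV / w') := by nlinarith
    _ = xV := by field_simp
  have hSU : Summable fun n => p n * x ^ n := hUconv x hx0.le hxU'
  have hSU' : Summable fun n => p n * x' ^ n := hUconv x' hx'0.le hx'U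
  have hSV : Summable fun n => b n * (w * x) ^ n :=
    hVconv _ (mul_nonneg hw0.le hx0.le) hwx
  have hSV' : Summable fun n => b n * (w' * x') ^ n :=
    hVconv _ (mul_nonneg hw'0.le hx'0.le) hw'x'
  -- U x ≤ U x'
  have hUle : U x ≤ U x' := by
    rw [hU, hU]
    exact Summable.tsum_le_tsum (fun n => by
      have := pow_le_pow_left₀ hx0.le hcon n
      nlinarith [hp n]) hSU hSU'
  -- U x' > 0
  have hUpos : 0 < U x' := by
    rw [hU]
    have h1 : 0 < p N * x' ^ N := mul_pos hpNpos (pow_pos hx'0 N)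
    have h2 : p N * x' ^ N ≤ ∑' n, p n * x' ^ n :=
      Summable.le_tsum hSU' N (fun n _ => mul_nonneg (hp n) (pow_nonneg hx'0.le n))
    linarith
  -- V (w x) < V (w' x')
  have hwxlt : w * x < w' * x' := by nlinarith
  have hVlt : V (w * x) < V (w' * x') := by
    rw [hV, hV]
    refine Summable.tsum_lt_tsum (i := M) (fun n => ?_) ?_ hSV hSV'
    · have h1 : (w * x) ^ n ≤ (w' * x') ^ n :=
        pow_le_pow_left₀ (mul_nonneg hw0.le hx0.le) hwxlt.le n
      nlinarith [hb n]
    · have h1 : (w * x) ^ M < (w' * x') ^ M :=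
        pow_lt_pow_left₀ hwxlt (mul_nonneg hw0.le hx0.le) (by omega)
      nlinarith
  -- V (w x) ≥ 0
  have hVnn : 0 ≤ V (w * x) := by
    rw [hV]
    exact tsum_nonneg (fun n => mul_nonneg (hb n) (pow_nonneg (mul_nonneg hw0.le hx0.le) n))
  have : (1 : ℝ) < 1 := by
    calc (1 : ℝ) = U x * V (w * x) := heq.symm
    _ ≤ U x' * V (w * x) := mul_le_mul_of_nonneg_right hUle hVnn
    _ < U x' * V (w' * x') := mul_lt_mul_of_pos_left hVlt hUpos
    _ = 1 := heq'
  exact absurd this (lt_irrefl 1)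
end

section
/- Fix w ≥ 1 and suppose there exists x₁ ∈ (0, min(x_U, x_V/w)) with U(x₁)·V(w·x₁) = 1. Let P = Σ_{n≥1} p_n X^n and V_w = Σ_{n≥0} b_n w^n X^n be the corresponding formal power series over ℝ, and define the sequence (Z_n(w))_{n≥0} by Σ_{n≥0} Z_n(w) X^n = V_w · (1 − P·V_w)⁻¹ as formal power series (the inverse exists since 1 − P·V_w has constant coefficient 1). Then the radius of convergence of the power series Σ_{n≥0} Z_n(w) x^n, i.e. sup{r ≥ 0 : Σ_{n≥0} Z_n(w)·r^n converges}, equals x₁. -/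
/-!
Put `A = P·V_w` and `B = V_w`, so that `Z = B·(1 - A)⁻¹` satisfies the renewal equation
`Z = B + A·Z`. All coefficients are nonnegative, and on the common disc of convergence
`A(r) = U(r)·V(w·r)`. If `A(r) < 1`, the partial sums of `Z(r)` satisfy `S ≤ B(r) + A(r)·S`,
so `Z(r)` converges; if `Z(r)` converges, then `Z(r) = B(r) + A(r)·Z(r)` with `B(r) > 0`
forces `A(r) < 1`. Since `A(0) = 0`, the function `A(r)/r` is nondecreasing, so `A(r) < 1`
exactly for `r < x₁`, where `A(x₁) = 1`.
-/

open Finset PowerSeries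

namespace PowerSeries

theorem coeff_mul_mul_pow {R : Type*} [CommSemiring R] (f g : R⟦X⟧) (r : R) (n : ℕ) :
    coeff n (f * g) * r ^ n =
      ∑ kl ∈ antidiagonal n, (coeff kl.1 f * r ^ kl.1) * (coeff kl.2 g * r ^ kl.2) := by
  rw [coeff_mul, sum_mul]
  refine sum_congr rfl fun kl hkl => ?_
  rw [← HasAntidiagonal.mem_antidiagonal.mp hkl, pow_add]
  ring

theorem hasSum_coeff_mul_mul_pow {R : Type*} [NormedCommRing R] [CompleteSpace R]
    {f g : R⟦X⟧} {r : R} (hf : Summable fun n => ‖coeff n f * r ^ n‖)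
    (hg : Summable fun n => ‖coeff n g * r ^ n‖) :
    HasSum (fun n => coeff n (f * g) * r ^ n)
      ((∑' n, coeff n f * r ^ n) * ∑' n, coeff n g * r ^ n) := by
  simp only [coeff_mul_mul_pow]
  rw [tsum_mul_tsum_eq_tsum_sum_antidiagonal_of_summable_norm hf hg]
  exact (summable_norm_sum_mul_antidiagonal_of_summable_norm hf hg).of_norm.hasSum

theorem mul_inv_one_sub_eq_add_mul {k : Type*} [Field k] {A : k⟦X⟧} (hA₀ : constantCoeff A = 0)
    (B : k⟦X⟧) : B * (1 - A)⁻¹ = B + A * (B * (1 - A)⁻¹) := by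
  have hunit : constantCoeff (1 - A) ≠ 0 := by simp [hA₀]
  calc B * (1 - A)⁻¹ = B * ((1 - A)⁻¹ * (1 - A)) + A * (B * (1 - A)⁻¹) := by ring
    _ = B + A * (B * (1 - A)⁻¹) := by rw [PowerSeries.inv_mul_cancel _ hunit, mul_one]

section Nonneg

variable {R : Type*} [CommSemiring R] [PartialOrder R] [IsOrderedRing R]

theorem coeff_mul_nonneg {f g : R⟦X⟧} (hf : ∀ n, 0 ≤ coeff n f) (hg : ∀ n, 0 ≤ coeff n g)
    (n : ℕ) : 0 ≤ coeff n (f * g) := by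
  rw [coeff_mul]
  exact sum_nonneg fun kl _ => mul_nonneg (hf _) (hg _)

theorem coeff_nonneg_of_eq_add_mul {A B Z : R⟦X⟧} (hA : ∀ n, 0 ≤ coeff n A)
    (hA₀ : constantCoeff A = 0) (hB : ∀ n, 0 ≤ coeff n B) (hZ : Z = B + A * Z) (n : ℕ) :
    0 ≤ coeff n Z := by
  induction n using Nat.strong_induction_on with
  | _ n ih =>
    rw [hZ, map_add, coeff_mul]
    refine add_nonneg (hB n) (sum_nonneg fun kl hkl => ?_)
    rcases Nat.eq_zero_or_pos kl.1 with h0 | hpos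
    · simp [h0, hA₀]
    · exact mul_nonneg (hA _) (ih _ (by have := HasAntidiagonal.mem_antidiagonal.mp hkl; omega))

theorem sum_range_coeff_mul_mul_pow_le {f g : R⟦X⟧} (hf : ∀ n, 0 ≤ coeff n f)
    (hg : ∀ n, 0 ≤ coeff n g) {r : R} (hr : 0 ≤ r) (M : ℕ) :
    ∑ n ∈ range M, coeff n (f * g) * r ^ n ≤
      (∑ n ∈ range M, coeff n f * r ^ n) * ∑ n ∈ range M, coeff n g * r ^ n := by
  have hdisj : (range M : Set ℕ).PairwiseDisjoint antidiagonal := fun m _ n _ hmn =>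
    disjoint_left.2 fun kl h₁ h₂ => hmn <|
      (HasAntidiagonal.mem_antidiagonal.1 h₁).symm.trans (HasAntidiagonal.mem_antidiagonal.1 h₂)
  simp only [coeff_mul_mul_pow, sum_mul_sum, ← sum_product', ← sum_biUnion hdisj]
  refine sum_le_sum_of_subset_of_nonneg (fun kl hkl => ?_) fun kl _ _ =>
    mul_nonneg (mul_nonneg (hf _) (pow_nonneg hr _)) (mul_nonneg (hg _) (pow_nonneg hr _))
  simp only [mem_biUnion, mem_range, HasAntidiagonal.mem_antidiagonal, mem_product] at hkl ⊢
  omega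

end Nonneg

section Real

theorem summable_mul_pow_of_le {a : ℕ → ℝ} (ha : ∀ n, 0 ≤ a n) {s t : ℝ} (hs : 0 ≤ s)
    (hst : s ≤ t) (ht : Summable fun n => a n * t ^ n) : Summable fun n => a n * s ^ n :=
  ht.of_nonneg_of_le (fun n => mul_nonneg (ha n) (pow_nonneg hs n))
    fun n => mul_le_mul_of_nonneg_left (pow_le_pow_left₀ hs hst n) (ha n)

theorem mul_tsum_mul_pow_le_mul_tsum_mul_pow {a : ℕ → ℝ} (ha : ∀ n, 0 ≤ a n) (ha₀ : a 0 = 0)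
    {s t : ℝ} (hs : 0 ≤ s) (hst : s ≤ t) (ht : Summable fun n => a n * t ^ n) :
    t * ∑' n, a n * s ^ n ≤ s * ∑' n, a n * t ^ n := by
  have hterm : ∀ n, t * (a n * s ^ n) ≤ s * (a n * t ^ n) := by
    rintro (_ | n)
    · simp [ha₀]
    · have hst_n : s ^ n ≤ t ^ n := pow_le_pow_left₀ hs hst n
      have hcoeff : 0 ≤ a (n + 1) * s * t := mul_nonneg (mul_nonneg (ha _) hs) (hs.trans hst)
      calc t * (a (n + 1) * s ^ (n + 1)) = a (n + 1) * s * t * s ^ n := by ring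
        _ ≤ a (n + 1) * s * t * t ^ n := mul_le_mul_of_nonneg_left hst_n hcoeff
        _ = s * (a (n + 1) * t ^ (n + 1)) := by ring
  rw [← tsum_mul_left, ← tsum_mul_left]
  exact ((summable_mul_pow_of_le ha hs hst ht).mul_left t).tsum_le_tsum hterm (ht.mul_left s)

variable {A B Z : ℝ⟦X⟧} {r : ℝ}

theorem summable_of_eq_add_mul (hA : ∀ n, 0 ≤ coeff n A) (hB : ∀ n, 0 ≤ coeff n B)
    (hZ₀ : ∀ n, 0 ≤ coeff n Z) (hZ : Z = B + A * Z) (hr : 0 ≤ r)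
    (hAs : Summable fun n => coeff n A * r ^ n) (hA1 : ∑' n, coeff n A * r ^ n < 1)
    (hBs : Summable fun n => coeff n B * r ^ n) : Summable fun n => coeff n Z * r ^ n := by
  refine summable_of_sum_range_le (c := (∑' n, coeff n B * r ^ n) / (1 - ∑' n, coeff n A * r ^ n))
    (fun n => mul_nonneg (hZ₀ n) (pow_nonneg hr n)) fun M => ?_
  have hS₀ : 0 ≤ ∑ n ∈ range M, coeff n Z * r ^ n :=
    sum_nonneg fun n _ => mul_nonneg (hZ₀ n) (pow_nonneg hr n)
  have hA_le : ∑ n ∈ range M, coeff n A * r ^ n ≤ ∑' n, coeff n A * r ^ n :=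
    hAs.sum_le_tsum _ fun n _ => mul_nonneg (hA n) (pow_nonneg hr n)
  have hS : ∑ n ∈ range M, coeff n Z * r ^ n ≤
      ∑' n, coeff n B * r ^ n + (∑' n, coeff n A * r ^ n) * ∑ n ∈ range M, coeff n Z * r ^ n :=
    calc ∑ n ∈ range M, coeff n Z * r ^ n
        = ∑ n ∈ range M, coeff n B * r ^ n + ∑ n ∈ range M, coeff n (A * Z) * r ^ n := by
          rw [← sum_add_distrib]
          exact sum_congr rfl fun n _ => by rw [← add_mul, ← map_add, ← hZ]
      _ ≤ ∑' n, coeff n B * r ^ n +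
          (∑ n ∈ range M, coeff n A * r ^ n) * ∑ n ∈ range M, coeff n Z * r ^ n :=
        add_le_add (hBs.sum_le_tsum _ fun n _ => mul_nonneg (hB n) (pow_nonneg hr n))
          (sum_range_coeff_mul_mul_pow_le hA hZ₀ hr M)
      _ ≤ _ := by gcongr
  rw [le_div_iff₀ (sub_pos.2 hA1)]
  linarith

theorem tsum_lt_one_of_eq_add_mul (hB : ∀ n, 0 ≤ coeff n B) (hB₀ : 0 < coeff 0 B)
    (hZ₀ : ∀ n, 0 ≤ coeff n Z) (hZ : Z = B + A * Z) (hr : 0 ≤ r)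
    (hAs : Summable fun n => coeff n A * r ^ n) (hBs : Summable fun n => coeff n B * r ^ n)
    (hZs : Summable fun n => coeff n Z * r ^ n) : ∑' n, coeff n A * r ^ n < 1 := by
  have hAZ := hasSum_coeff_mul_mul_pow hAs.norm hZs.norm
  have hrenewal : ∑' n, coeff n Z * r ^ n =
      ∑' n, coeff n B * r ^ n + (∑' n, coeff n A * r ^ n) * ∑' n, coeff n Z * r ^ n := by
    rw [← hAZ.tsum_eq, ← hBs.tsum_add hAZ.summable]
    exact tsum_congr fun n => by rw [← add_mul, ← map_add, ← hZ]
  have hB_pos : 0 < ∑' n, coeff n B * r ^ n :=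
    hBs.tsum_pos (fun n => mul_nonneg (hB n) (pow_nonneg hr n)) 0 (by simpa using hB₀)
  have hZ_nonneg : 0 ≤ ∑' n, coeff n Z * r ^ n :=
    tsum_nonneg fun n => mul_nonneg (hZ₀ n) (pow_nonneg hr n)
  nlinarith

variable {ρ x₁ : ℝ}

theorem summable_coeff_mul_inv_one_sub_of_lt (hA : ∀ n, 0 ≤ coeff n A)
    (hA₀ : constantCoeff A = 0) (hB : ∀ n, 0 ≤ coeff n B)
    (hAs : ∀ r, 0 ≤ r → r < ρ → Summable fun n => coeff n A * r ^ n)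
    (hBs : ∀ r, 0 ≤ r → r < ρ → Summable fun n => coeff n B * r ^ n)
    (hx₁ : x₁ ∈ Set.Ioo 0 ρ) (hcrit : ∑' n, coeff n A * x₁ ^ n = 1) (hr : 0 ≤ r) (hrx₁ : r < x₁) :
    Summable fun n => coeff n (B * (1 - A)⁻¹) * r ^ n := by
  have hZ := mul_inv_one_sub_eq_add_mul hA₀ B
  have hscale := mul_tsum_mul_pow_le_mul_tsum_mul_pow hA (by simpa using hA₀) hr hrx₁.le
    (hAs x₁ hx₁.1.le hx₁.2)
  rw [hcrit] at hscale
  refine summable_of_eq_add_mul hA hB (coeff_nonneg_of_eq_add_mul hA hA₀ hB hZ) hZ hr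
    (hAs r hr (hrx₁.trans hx₁.2)) ?_ (hBs r hr (hrx₁.trans hx₁.2))
  nlinarith [hx₁.1]

theorem le_of_summable_coeff_mul_inv_one_sub (hA : ∀ n, 0 ≤ coeff n A)
    (hA₀ : constantCoeff A = 0) (hB : ∀ n, 0 ≤ coeff n B) (hB₀ : 0 < coeff 0 B)
    (hAs : ∀ r, 0 ≤ r → r < ρ → Summable fun n => coeff n A * r ^ n)
    (hBs : ∀ r, 0 ≤ r → r < ρ → Summable fun n => coeff n B * r ^ n)
    (hx₁ : x₁ ∈ Set.Ioo 0 ρ) (hcrit : ∑' n, coeff n A * x₁ ^ n = 1)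
    (hZs : Summable fun n => coeff n (B * (1 - A)⁻¹) * r ^ n) : r ≤ x₁ := by
  by_contra! hx₁r
  obtain ⟨s, hx₁s, hsr, hsρ⟩ : ∃ s, x₁ < s ∧ s ≤ r ∧ s < ρ :=
    ⟨min r ((x₁ + ρ) / 2), lt_min hx₁r (by linarith [hx₁.2]), min_le_left _ _,
      (min_le_right _ _).trans_lt (by linarith [hx₁.2])⟩
  have hs : 0 ≤ s := hx₁.1.le.trans hx₁s.le
  have hZ := mul_inv_one_sub_eq_add_mul hA₀ B
  have hZ₀ := coeff_nonneg_of_eq_add_mul hA hA₀ hB hZ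
  have hlt := tsum_lt_one_of_eq_add_mul hB hB₀ hZ₀ hZ hs (hAs s hs hsρ) (hBs s hs hsρ)
    (summable_mul_pow_of_le hZ₀ hs hsr hZs)
  have hscale := mul_tsum_mul_pow_le_mul_tsum_mul_pow hA (by simpa using hA₀) hx₁.1.le hx₁s.le
    (hAs s hs hsρ)
  rw [hcrit] at hscale
  nlinarith [hx₁.1]

theorem sSup_summable_coeff_mul_inv_one_sub_eq (hA : ∀ n, 0 ≤ coeff n A)
    (hA₀ : constantCoeff A = 0) (hB : ∀ n, 0 ≤ coeff n B) (hB₀ : 0 < coeff 0 B)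
    (hAs : ∀ r, 0 ≤ r → r < ρ → Summable fun n => coeff n A * r ^ n)
    (hBs : ∀ r, 0 ≤ r → r < ρ → Summable fun n => coeff n B * r ^ n)
    (hx₁ : x₁ ∈ Set.Ioo 0 ρ) (hcrit : ∑' n, coeff n A * x₁ ^ n = 1) :
    sSup {r : ℝ | 0 ≤ r ∧ Summable fun n => coeff n (B * (1 - A)⁻¹) * r ^ n} = x₁ := by
  have hsummable {r : ℝ} :=
    summable_coeff_mul_inv_one_sub_of_lt (r := r) hA hA₀ hB hAs hBs hx₁ hcrit
  refine csSup_eq_of_forall_le_of_forall_lt_exists_gt ⟨0, le_rfl, hsummable le_rfl hx₁.1⟩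
    (fun r hr => le_of_summable_coeff_mul_inv_one_sub hA hA₀ hB hB₀ hAs hBs hx₁ hcrit hr.2)
    fun y hy => ⟨max 0 ((y + x₁) / 2), ⟨le_max_left _ _, hsummable (le_max_left _ _)
      (max_lt hx₁.1 (by linarith))⟩, lt_max_of_lt_right (by linarith)⟩

end Real

end PowerSeries

open Filter Topology Set

theorem stmt_5_general
    (p b : ℕ → ℝ)
    (hp : ∀ n, 0 ≤ p n) (hp0 : p 0 = 0)
    (hb : ∀ n, 0 ≤ b n) (hb0 : 0 < b 0)
    (U V : ℝ → ℝ)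
    (hU : ∀ x, U x = ∑' n, p n * x ^ n)
    (hV : ∀ x, V x = ∑' n, b n * x ^ n)
    (xU xV : ℝ)
    (hUconv : ∀ x : ℝ, 0 ≤ x → x < xU → Summable fun n => p n * x ^ n)
    (hVconv : ∀ x : ℝ, 0 ≤ x → x < xV → Summable fun n => b n * x ^ n)
    (w : ℝ) (hw : 1 ≤ w)
    (x₁ : ℝ) (hx₁ : x₁ ∈ Set.Ioo 0 (min xU (xV / w)))
    (hcrit : U x₁ * V (w * x₁) = 1)
    (Z : PowerSeries ℝ)
    (hZ : Z = PowerSeries.mk (fun n => b n * w ^ n) *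
      (1 - PowerSeries.mk p * PowerSeries.mk (fun n => b n * w ^ n))⁻¹) :
    sSup {r : ℝ | 0 ≤ r ∧ Summable fun n => PowerSeries.coeff n Z * r ^ n} = x₁ := by
  have hw₀ : 0 < w := one_pos.trans_le hw
  set Vw : ℝ⟦X⟧ := mk fun n => b n * w ^ n
  have hP : ∀ n, 0 ≤ coeff n (mk p) := by simpa using hp
  have hVw : ∀ n, 0 ≤ coeff n Vw := fun n => by
    simpa [Vw] using mul_nonneg (hb n) (pow_nonneg hw₀.le n)
  have hVw_hasSum : ∀ r, 0 ≤ r → r < min xU (xV / w) →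
      HasSum (fun n => coeff n Vw * r ^ n) (V (w * r)) := by
    intro r hr hrρ
    have hwr : w * r < xV := by
      rw [← lt_div_iff₀' hw₀]; exact hrρ.trans_le (min_le_right _ _)
    simp only [Vw, coeff_mk, mul_assoc, ← mul_pow, hV]
    exact (hVconv _ (by positivity) hwr).hasSum
  have hA_hasSum : ∀ r, 0 ≤ r → r < min xU (xV / w) →
      HasSum (fun n => coeff n (mk p * Vw) * r ^ n) (U r * V (w * r)) := by
    intro r hr hrρ
    have hPs : Summable fun n => coeff n (mk p) * r ^ n := by
      simpa using hUconv r hr (hrρ.trans_le (min_le_left _ _))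
    have hVws := (hVw_hasSum r hr hrρ).summable
    rw [hU, ← (hVw_hasSum r hr hrρ).tsum_eq]
    simpa using hasSum_coeff_mul_mul_pow hPs.norm hVws.norm
  subst hZ
  exact sSup_summable_coeff_mul_inv_one_sub_eq (coeff_mul_nonneg hP hVw) (by simp [hp0]) hVw
    (by simpa [Vw] using hb0) (fun r hr hrρ => (hA_hasSum r hr hrρ).summable)
    (fun r hr hrρ => (hVw_hasSum r hr hrρ).summable) hx₁
    ((hA_hasSum x₁ hx₁.1.le hx₁.2).tsum_eq.trans hcrit)

/-- Fix w ≥ 1 with a solution x₁ ∈ (0, min(x_U, x_V/w)) of the critical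
equation U(x₁)·V(w·x₁) = 1.  Then the radius of convergence of the chain generating
function Z(x,w) = V_w·(1 − P·V_w)⁻¹ (as a formal power series) equals x₁. -/
theorem stmt_5
    (p b : ℕ → ℝ)
    (hp : ∀ n, 0 ≤ p n) (hp0 : p 0 = 0)
    (hb : ∀ n, 0 ≤ b n) (hb0 : 0 < b 0)
    (hpN : ∃ N, 1 ≤ N ∧ 0 < p N) (hbM : ∃ M, 1 ≤ M ∧ 0 < b M)
    (U V : ℝ → ℝ)
    (hU : ∀ x, U x = ∑' n, p n * x ^ n)
    (hV : ∀ x, V x = ∑' n, b n * x ^ n)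
    (xU xV : ℝ) (hxU0 : 0 < xU) (hxUV : xU < xV) (hxV1 : xV ≤ 1)
    (hUconv : ∀ x : ℝ, 0 ≤ x → x < xU → Summable fun n => p n * x ^ n)
    (hUdiv : ∀ x : ℝ, xU < x → ¬ Summable fun n => p n * x ^ n)
    (hVconv : ∀ x : ℝ, 0 ≤ x → x < xV → Summable fun n => b n * x ^ n)
    (hVdiv : ∀ x : ℝ, xV < x → ¬ Summable fun n => b n * x ^ n)
    (hVinf : Filter.Tendsto V (𝓝[<] xV) Filter.atTop)
    (w : ℝ) (hw : 1 ≤ w)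
    (x₁ : ℝ) (hx₁ : x₁ ∈ Set.Ioo 0 (min xU (xV / w)))
    (hcrit : U x₁ * V (w * x₁) = 1)
    (Z : PowerSeries ℝ)
    (hZ : Z = PowerSeries.mk (fun n => b n * w ^ n) *
      (1 - PowerSeries.mk p * PowerSeries.mk (fun n => b n * w ^ n))⁻¹) :
    sSup {r : ℝ | 0 ≤ r ∧ Summable fun n => PowerSeries.coeff n Z * r ^ n} = x₁ :=
  stmt_5_general p b hp hp0 hb hb0 U V hU hV xU xV hUconv hVconv w hw x₁ hx₁ hcrit Z hZ
end

section
/- For w ∈ (w_c, x_V/x_U), the unique solution x₁(w) of U(x₁(w))·V(w·x₁(w)) = 1 converges to x_U as w → w_c from the right. -/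
open Filter Topology Set

/-- For w ∈ (w_c, x_V/x_U), the unique solution x₁(w) of
U(x₁(w))·V(w·x₁(w)) = 1 converges to x_U as w → w_c⁺. -/
theorem stmt_8
    (p b : ℕ → ℝ)
    (hp : ∀ n, 0 ≤ p n) (hp0 : p 0 = 0)
    (hb : ∀ n, 0 ≤ b n) (hb0 : 0 < b 0)
    (hpN : ∃ N, 1 ≤ N ∧ 0 < p N) (hbM : ∃ M, 1 ≤ M ∧ 0 < b M)
    (U V : ℝ → ℝ)
    (hU : ∀ x, U x = ∑' n, p n * x ^ n)
    (hV : ∀ x, V x = ∑' n, b n * x ^ n)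
    (xU xV : ℝ) (hxU0 : 0 < xU) (hxUV : xU < xV) (hxV1 : xV ≤ 1)
    (hUconv : ∀ x : ℝ, 0 ≤ x → x < xU → Summable fun n => p n * x ^ n)
    (hUdiv : ∀ x : ℝ, xU < x → ¬ Summable fun n => p n * x ^ n)
    (hVconv : ∀ x : ℝ, 0 ≤ x → x < xV → Summable fun n => b n * x ^ n)
    (hVdiv : ∀ x : ℝ, xV < x → ¬ Summable fun n => b n * x ^ n)
    (hVinf : Filter.Tendsto V (𝓝[<] xV) Filter.atTop)
    (L : ℝ) (hL : Filter.Tendsto U (𝓝[<] xU) (𝓝 L))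
    (hsub : L * V xU < 1)
    (wc : ℝ) (hwc : wc ∈ Set.Ioo 1 (xV / xU)) (hwceq : L * V (wc * xU) = 1)
    (x₁ : ℝ → ℝ)
    (hx₁ : ∀ w ∈ Set.Ioo wc (xV / xU),
      x₁ w ∈ Set.Ioo 0 xU ∧ U (x₁ w) * V (w * x₁ w) = 1)
    (hx₁uniq : ∀ w ∈ Set.Ioo wc (xV / xU), ∀ x ∈ Set.Ioo 0 xU,
      U x * V (w * x) = 1 → x = x₁ w) :
    Filter.Tendsto x₁ (𝓝[>] wc) (𝓝 xU) := by

  obtain ⟨N, hN1, hpN'⟩ := hpN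
  have hwc1 : (1:ℝ) < wc := hwc.1
  have hwc0 : (0:ℝ) < wc := lt_trans one_pos hwc1
  have hwcxU : wc * xU < xV := (lt_div_iff₀ hxU0).mp hwc.2
  have Unonneg : ∀ x : ℝ, 0 ≤ x → 0 ≤ U x := fun x hx => by
    rw [hU]; exact tsum_nonneg fun n => mul_nonneg (hp n) (pow_nonneg hx n)
  have Vnonneg : ∀ x : ℝ, 0 ≤ x → 0 ≤ V x := fun x hx => by
    rw [hV]; exact tsum_nonneg fun n => mul_nonneg (hb n) (pow_nonneg hx n)
  have Umono : ∀ x y : ℝ, 0 ≤ x → x ≤ y → y < xU → U x ≤ U y := by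
    intro x y hx hxy hy
    rw [hU, hU]
    exact Summable.tsum_le_tsum (fun n => mul_le_mul_of_nonneg_left (pow_le_pow_left₀ hx hxy n) (hp n))
      (hUconv x hx (lt_of_le_of_lt hxy hy)) (hUconv y (hx.trans hxy) hy)
  have Ustrict : ∀ x y : ℝ, 0 ≤ x → x < y → y < xU → U x < U y := by
    intro x y hx hxy hy
    rw [hU, hU]
    refine Summable.tsum_lt_tsum (i := N)
      (fun n => mul_le_mul_of_nonneg_left (pow_le_pow_left₀ hx hxy.le n) (hp n))
      ?_ (hUconv x hx (hxy.trans hy)) (hUconv y (hx.trans hxy.le) hy)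
    exact mul_lt_mul_of_pos_left (pow_lt_pow_left₀ hxy hx (by omega)) hpN'
  have Vmono : ∀ x y : ℝ, 0 ≤ x → x ≤ y → y < xV → V x ≤ V y := by
    intro x y hx hxy hy
    rw [hV, hV]
    exact Summable.tsum_le_tsum (fun n => mul_le_mul_of_nonneg_left (pow_le_pow_left₀ hx hxy n) (hb n))
      (hVconv x hx (lt_of_le_of_lt hxy hy)) (hVconv y (hx.trans hxy) hy)
  have Vpos : ∀ x : ℝ, 0 ≤ x → x < xV → 0 < V x := by
    intro x hx hxlt
    rw [hV]
    have h := Summable.le_tsum (hVconv x hx hxlt) 0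
      (fun n _ => mul_nonneg (hb n) (pow_nonneg hx n))
    simp only [pow_zero, mul_one] at h
    linarith
  have UleL : ∀ x : ℝ, 0 ≤ x → x < xU → U x ≤ L := by
    intro x hx hxlt
    refine ge_of_tendsto hL ?_
    filter_upwards [Ioo_mem_nhdsLT_of_mem (⟨hxlt, le_refl xU⟩ : xU ∈ Ioc x xU)] with z hz
    exact Umono x z hx hz.1.le hz.2
  have UltL : ∀ x : ℝ, 0 ≤ x → x < xU → U x < L := by
    intro x hx hxlt
    have hm1 : x < (x + xU)/2 := by linarith
    have hm2 : (x + xU)/2 < xU := by linarith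
    exact lt_of_lt_of_le (Ustrict x _ hx hm1 hm2) (UleL _ (by linarith) hm2)
  rw [Metric.tendsto_nhdsWithin_nhds]
  intro ε hε
  set ε' := min ε (xU/2) with hε'def
  have hε'pos : 0 < ε' := lt_min hε (by linarith)
  have hε'le : ε' ≤ ε := min_le_left _ _
  have hε'half : ε' ≤ xU/2 := min_le_right _ _
  set y := xU - ε' with hydef
  have hy0 : 0 < y := by simp only [hydef]; linarith
  have hyxU : y < xU := by simp only [hydef]; linarith
  have hδ1 : wc < wc * xU / y := by
    rw [lt_div_iff₀ hy0]; nlinarith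
  refine ⟨min (wc*xU/y - wc) (xV/xU - wc), lt_min (by linarith) (by linarith [hwc.2]), ?_⟩
  intro w hw hdist
  have hwgt : wc < w := hw
  have habs : |w - wc| < min (wc*xU/y - wc) (xV/xU - wc) := by
    rwa [Real.dist_eq] at hdist
  have hsub1 : w - wc < wc*xU/y - wc := lt_of_le_of_lt (le_abs_self _)
    (habs.trans_le (min_le_left _ _))
  have hsub2 : w - wc < xV/xU - wc := lt_of_le_of_lt (le_abs_self _)
    (habs.trans_le (min_le_right _ _))
  have hwlt2 : w < xV/xU := by linarith
  obtain ⟨hx₁mem, hx₁eq⟩ := hx₁ w ⟨hwgt, hwlt2⟩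
  have hwpos : (0:ℝ) < w := lt_trans hwc0 hwgt
  have hx₁y : y < x₁ w := by
    by_contra h
    push_neg at h
    have h1 : U (x₁ w) ≤ U y := Umono _ _ hx₁mem.1.le h hyxU
    have hwy : w * y < wc * xU := by
      have : w < wc*xU/y := by linarith
      rwa [lt_div_iff₀ hy0] at this
    have hwyV : w * y < xV := hwy.trans hwcxU
    have hwx₁ : w * x₁ w ≤ w * y := mul_le_mul_of_nonneg_left h hwpos.le
    have h2 : V (w * x₁ w) ≤ V (wc * xU) := by
      refine le_trans (Vmono _ _ (mul_nonneg hwpos.le hx₁mem.1.le) hwx₁ hwyV) ?_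
      exact Vmono _ _ (mul_nonneg hwpos.le hy0.le) hwy.le hwcxU
    have hUy : U y < L := UltL y hy0.le hyxU
    have hVwc : 0 < V (wc*xU) := Vpos _ (by positivity) hwcxU
    have hcontr : (1:ℝ) < 1 := by
      calc (1:ℝ) = U (x₁ w) * V (w * x₁ w) := hx₁eq.symm
      _ ≤ U y * V (w * x₁ w) :=
          mul_le_mul_of_nonneg_right h1 (Vnonneg _ (mul_nonneg hwpos.le hx₁mem.1.le))
      _ ≤ U y * V (wc*xU) := mul_le_mul_of_nonneg_left h2 (Unonneg y hy0.le)
      _ < L * V (wc*xU) := mul_lt_mul_of_pos_right hUy hVwc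
      _ = 1 := hwceq
    exact absurd hcontr (lt_irrefl 1)
  rw [Real.dist_eq, abs_lt]
  have h2 := hx₁mem.2
  constructor <;> simp only [hydef] at hx₁y <;> linarith
end

section
/- Suppose additionally that U'(x) converges to a finite limit D ∈ (0, ∞) as x → x_U⁻. Define, for w ∈ (w_c, x_V/x_U), θ(w) = w·U(x₁(w))·V'(w·x₁(w)) / ( U'(x₁(w))·V(w·x₁(w)) + w·U(x₁(w))·V'(w·x₁(w)) ). Then as w → w_c from the right, θ(w) converges to θ_c := w_c·U(x_U⁻)·V'(w_c·x_U) / ( D·V(w_c·x_U) + w_c·U(x_U⁻)·V'(w_c·x_U) ), and θ_c > 0; i.e., the phase transition at w_c is first order. -/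
open Filter Topology Set


lemma aux_summable (c : ℕ → ℝ) (hc : ∀ n, 0 ≤ c n) {r ρ : ℝ} (hρ0 : 0 ≤ ρ) (hρr : ρ < r)
    (hr : Summable fun n => c n * r ^ n) :
    Summable fun n : ℕ => ((n : ℝ) + 1) * c (n + 1) * ρ ^ n := by
  have hr0 : 0 < r := lt_of_le_of_lt hρ0 hρr
  set C : ℝ := ∑' n, c n * r ^ n with hCdef
  have hC : ∀ n, c n * r ^ n ≤ C := fun n =>
    Summable.le_tsum hr n (fun j _ => mul_nonneg (hc j) (by positivity))
  have hq1 : ρ / r < 1 := (div_lt_one hr0).2 hρr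
  have hq0 : 0 ≤ ρ / r := by positivity
  have hsum : Summable fun n : ℕ => ((n : ℝ) + 1) * (ρ / r) ^ n := by
    have h1 : Summable fun n : ℕ => (n : ℝ) ^ 1 * (ρ / r) ^ n :=
      summable_pow_mul_geometric_of_norm_lt_one 1
        (by rwa [Real.norm_eq_abs, abs_of_nonneg hq0])
    have h2 : Summable fun n : ℕ => (ρ / r) ^ n := summable_geometric_of_lt_one hq0 hq1
    have := h1.add h2
    refine this.congr fun n => by ring
  refine Summable.of_nonneg_of_le (fun n => mul_nonneg (mul_nonneg (by positivity) (hc (n+1))) (by positivity)) ?_ (hsum.mul_left (C / r))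
  intro n
  have h1 : c (n + 1) * r ^ (n + 1) ≤ C := hC (n + 1)
  have h2 : c (n + 1) ≤ C / r ^ (n + 1) := (le_div_iff₀ (by positivity)).2 h1
  calc ((n : ℝ) + 1) * c (n + 1) * ρ ^ n
      ≤ ((n : ℝ) + 1) * (C / r ^ (n + 1)) * ρ ^ n := by
        exact mul_le_mul_of_nonneg_right
          (mul_le_mul_of_nonneg_left h2 (by positivity)) (by positivity)
    _ = C / r * (((n : ℝ) + 1) * (ρ / r) ^ n) := by
        rw [div_pow]; field_simp; ring

lemma aux_hasDerivAt (c : ℕ → ℝ) (hc : ∀ n, 0 ≤ c n) {r y : ℝ} (hy0 : 0 ≤ y) (hyr : y < r)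
    (hr : Summable fun n => c n * r ^ n) :
    HasDerivAt (fun x => ∑' n, c n * x ^ n) (∑' n : ℕ, ((n : ℝ) + 1) * c (n + 1) * y ^ n) y := by
  have hr0 : 0 < r := lt_of_le_of_lt hy0 hyr
  set ρ : ℝ := (y + r) / 2 with hρdef
  have hyρ : y < ρ := by rw [hρdef]; linarith
  have hρr : ρ < r := by rw [hρdef]; linarith
  have hρ0 : 0 < ρ := lt_of_le_of_lt hy0 hyρ
  have hshift : ∀ z : ℝ, 0 ≤ z → z < r →
      Summable fun n => c n * ((n : ℝ) * z ^ (n - 1)) := by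
    intro z hz0 hzr
    have h := aux_summable c hc hz0 hzr hr
    rw [← summable_nat_add_iff 1]
    refine h.congr fun n => ?_
    simp only [Nat.add_sub_cancel]
    push_cast
    ring
  have key : HasDerivAt (fun x => ∑' n, c n * x ^ n)
      (∑' n, c n * ((n : ℝ) * y ^ (n - 1))) y := by
    refine hasDerivAt_tsum_of_isPreconnected
      (u := fun n => c n * ((n : ℝ) * ρ ^ (n - 1))) (t := Set.Ioo (-ρ) ρ)
      (g := fun n x => c n * x ^ n) (g' := fun n x => c n * ((n : ℝ) * x ^ (n - 1))) (y₀ := y)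
      (hshift ρ hρ0.le hρr) isOpen_Ioo ((convex_Ioo _ _).isPreconnected)
      (fun n x _ => (hasDerivAt_pow n x).const_mul (c n)) ?_ ?_ ?_ ?_
    · intro n x hx
      have hxρ : |x| ≤ ρ := le_of_lt (abs_lt.2 ⟨hx.1, hx.2⟩)
      simp only [Real.norm_eq_abs, abs_mul, abs_pow, Nat.abs_cast,
        abs_of_nonneg (hc n)]
      have h1 : (n:ℝ) * |x| ^ (n-1) ≤ (n:ℝ) * ρ ^ (n-1) :=
        mul_le_mul_of_nonneg_left (pow_le_pow_left₀ (abs_nonneg x) hxρ _) (Nat.cast_nonneg n)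
      exact mul_le_mul_of_nonneg_left h1 (hc n)
    · exact ⟨by linarith, hyρ⟩
    · exact Summable.of_nonneg_of_le (fun n => mul_nonneg (hc n) (by positivity))
        (fun n => mul_le_mul_of_nonneg_left
          (pow_le_pow_left₀ hy0 hyr.le n) (hc n)) hr
    · exact ⟨by linarith, hyρ⟩
  have heq : (∑' n, c n * ((n : ℝ) * y ^ (n - 1)))
      = ∑' n : ℕ, ((n : ℝ) + 1) * c (n + 1) * y ^ n := by
    rw [Summable.tsum_eq_zero_add (hshift y hy0 hyr)]
    simp only [Nat.cast_zero, zero_mul, mul_zero, zero_add]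
    exact tsum_congr fun n => by
      simp only [Nat.add_sub_cancel]
      push_cast
      ring
  rwa [heq] at key

/-- If additionally U'(x) → D ∈ (0,∞) as x → x_U⁻, then the fraction
of shared bonds θ(w) (evaluated along x₁(w)) converges, as w → w_c⁺, to
θ_c = w_c·U(x_U⁻)·V'(w_c·x_U)/(D·V(w_c·x_U) + w_c·U(x_U⁻)·V'(w_c·x_U)) > 0:
the phase transition at w_c is first order. -/
theorem stmt_10
    (p b : ℕ → ℝ)
    (hp : ∀ n, 0 ≤ p n) (hp0 : p 0 = 0)
    (hb : ∀ n, 0 ≤ b n) (hb0 : 0 < b 0)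
    (hpN : ∃ N, 1 ≤ N ∧ 0 < p N) (hbM : ∃ M, 1 ≤ M ∧ 0 < b M)
    (U V : ℝ → ℝ)
    (hU : ∀ x, U x = ∑' n, p n * x ^ n)
    (hV : ∀ x, V x = ∑' n, b n * x ^ n)
    (xU xV : ℝ) (hxU0 : 0 < xU) (hxUV : xU < xV) (hxV1 : xV ≤ 1)
    (hUconv : ∀ x : ℝ, 0 ≤ x → x < xU → Summable fun n => p n * x ^ n)
    (hUdiv : ∀ x : ℝ, xU < x → ¬ Summable fun n => p n * x ^ n)
    (hVconv : ∀ x : ℝ, 0 ≤ x → x < xV → Summable fun n => b n * x ^ n)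
    (hVdiv : ∀ x : ℝ, xV < x → ¬ Summable fun n => b n * x ^ n)
    (hVinf : Filter.Tendsto V (𝓝[<] xV) Filter.atTop)
    (L : ℝ) (hL : Filter.Tendsto U (𝓝[<] xU) (𝓝 L))
    (hsub : L * V xU < 1)
    (wc : ℝ) (hwc : wc ∈ Set.Ioo 1 (xV / xU)) (hwceq : L * V (wc * xU) = 1)
    (x₁ : ℝ → ℝ)
    (hx₁ : ∀ w ∈ Set.Ioo wc (xV / xU),
      x₁ w ∈ Set.Ioo 0 xU ∧ U (x₁ w) * V (w * x₁ w) = 1)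
    (hx₁uniq : ∀ w ∈ Set.Ioo wc (xV / xU), ∀ x ∈ Set.Ioo 0 xU,
      U x * V (w * x) = 1 → x = x₁ w)
    (D : ℝ) (hD0 : 0 < D)
    (hU'lim : Filter.Tendsto (deriv U) (𝓝[<] xU) (𝓝 D)) :
    Filter.Tendsto
      (fun w => w * U (x₁ w) * deriv V (w * x₁ w) /
        (deriv U (x₁ w) * V (w * x₁ w) + w * U (x₁ w) * deriv V (w * x₁ w)))
      (𝓝[>] wc)
      (𝓝 (wc * L * deriv V (wc * xU) /
        (D * V (wc * xU) + wc * L * deriv V (wc * xU)))) ∧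
    0 < wc * L * deriv V (wc * xU) /
        (D * V (wc * xU) + wc * L * deriv V (wc * xU)) := by
  obtain ⟨N, hN1, hpN⟩ := hpN
  obtain ⟨M, hM1, hbM⟩ := hbM
  have hwc1 : (1 : ℝ) < wc := hwc.1
  have hwc0 : (0 : ℝ) < wc := lt_trans one_pos hwc1
  have hwcxU : wc * xU < xV := by
    have := hwc.2
    rw [lt_div_iff₀ hxU0] at this
    linarith
  have hwcxU0 : 0 < wc * xU := mul_pos hwc0 hxU0
  -- basic V facts
  have hVval : ∀ y : ℝ, V y = ∑' n, b n * y ^ n := hV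
  have hVnn : ∀ y : ℝ, 0 ≤ y → y < xV → 0 ≤ V y := by
    intro y hy0 hyV
    rw [hV]
    exact tsum_nonneg fun n => mul_nonneg (hb n) (by positivity)
  have hVpos : ∀ y : ℝ, 0 ≤ y → y < xV → 0 < V y := by
    intro y hy0 hyV
    have h0 : b 0 * y ^ 0 ≤ V y := by
      rw [hV]
      exact Summable.le_tsum (hVconv y hy0 hyV) 0 fun j _ => mul_nonneg (hb j) (by positivity)
    simpa using lt_of_lt_of_le (by simpa using hb0) h0
  have hVmono : ∀ y z : ℝ, 0 ≤ y → y ≤ z → z < xV → V y ≤ V z := by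
    intro y z hy0 hyz hzV
    rw [hV, hV]
    exact Summable.tsum_le_tsum
      (fun n => mul_le_mul_of_nonneg_left (pow_le_pow_left₀ hy0 hyz n) (hb n))
      (hVconv y hy0 (lt_of_le_of_lt hyz hzV)) (hVconv z (le_trans hy0 hyz) hzV)
  -- V is differentiable, derivative given by the derived series
  have hVderiv : ∀ y : ℝ, 0 ≤ y → y < xV →
      HasDerivAt V (∑' n : ℕ, ((n : ℝ) + 1) * b (n + 1) * y ^ n) y := by
    intro y hy0 hyV
    have hr : y < (y + xV) / 2 := by linarith
    have hr2 : (y + xV) / 2 < xV := by linarith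
    have hVe : V = fun x => ∑' n, b n * x ^ n := funext hV
    rw [hVe]
    exact aux_hasDerivAt b hb hy0 hr (hVconv _ (by linarith) hr2)
  set W : ℝ → ℝ := fun y => ∑' n : ℕ, ((n : ℝ) + 1) * b (n + 1) * y ^ n with hWdef
  set d : ℕ → ℝ := fun n => ((n : ℝ) + 1) * b (n + 1) with hddef
  have hd : ∀ n, 0 ≤ d n := fun n => mul_nonneg (by positivity) (hb (n + 1))
  have hWeq : W = fun y => ∑' n, d n * y ^ n := rfl
  have hderivVeq : ∀ y : ℝ, 0 ≤ y → y < xV → deriv V y = W y := by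
    intro y hy0 hyV
    exact (hVderiv y hy0 hyV).deriv
  -- W is continuous at points of [0, xV)
  have hWcont : ∀ y : ℝ, 0 ≤ y → y < xV → ContinuousAt W y := by
    intro y hy0 hyV
    have hr : y < (y + xV) / 2 := by linarith
    have hr2 : (y + xV) / 2 < xV := by linarith
    have hr3 : (y + xV) / 2 < (3 * ((y + xV) / 2) + xV) / 4 + xV / 4 := by linarith
    have hdsum : Summable fun n => d n * ((y + xV) / 2) ^ n := by
      have h4 : ((y + xV) / 2 + xV) / 2 < xV := by linarith
      have h5 : (y + xV) / 2 < ((y + xV) / 2 + xV) / 2 := by linarith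
      exact aux_summable b hb (by linarith : (0:ℝ) ≤ (y + xV) / 2) h5
        (hVconv _ (by linarith) h4)
    rw [hWeq]
    exact (aux_hasDerivAt d hd hy0 hr hdsum).continuousAt
  have hVcont : ∀ y : ℝ, 0 ≤ y → y < xV → ContinuousAt V y := by
    intro y hy0 hyV
    exact (hVderiv y hy0 hyV).continuousAt
  -- continuity of deriv V at wc * xU
  have hderivVcont : ContinuousAt (deriv V) (wc * xU) := by
    have hmem : Set.Ioo (0 : ℝ) xV ∈ 𝓝 (wc * xU) :=
      isOpen_Ioo.mem_nhds ⟨hwcxU0, hwcxU⟩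
    have hEq : deriv V =ᶠ[𝓝 (wc * xU)] W :=
      Filter.eventuallyEq_of_mem hmem fun y hy => hderivVeq y hy.1.le hy.2
    exact (hWcont _ hwcxU0.le hwcxU).congr hEq.symm
  have hderivVval : deriv V (wc * xU) = W (wc * xU) :=
    hderivVeq _ hwcxU0.le hwcxU
  -- positivity of deriv V (wc * xU)
  have hV'pos : 0 < deriv V (wc * xU) := by
    rw [hderivVval]
    have hdsum : Summable fun n => d n * (wc * xU) ^ n := by
      have h5 : wc * xU < (wc * xU + xV) / 2 := by linarith
      have h4 : (wc * xU + xV) / 2 < xV := by linarith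
      exact aux_summable b hb hwcxU0.le h5 (hVconv _ (by linarith) h4)
    have hle : d (M - 1) * (wc * xU) ^ (M - 1) ≤ W (wc * xU) := by
      rw [hWeq]
      exact Summable.le_tsum hdsum (M - 1) fun j _ => mul_nonneg (hd j) (by positivity)
    have hdM : 0 < d (M - 1) := by
      have hM : M - 1 + 1 = M := Nat.succ_pred_eq_of_pos hM1
      show 0 < (((M - 1 : ℕ) : ℝ) + 1) * b (M - 1 + 1)
      rw [hM]
      exact mul_pos (by positivity) hbM
    exact lt_of_lt_of_le (mul_pos hdM (by positivity)) hle
  -- basic U facts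
  have hUnn : ∀ x : ℝ, 0 ≤ x → x < xU → 0 ≤ U x := by
    intro x hx0 hxU
    rw [hU]
    exact tsum_nonneg fun n => mul_nonneg (hp n) (by positivity)
  have hUmono : ∀ x z : ℝ, 0 ≤ x → x ≤ z → z < xU → U x ≤ U z := by
    intro x z hx0 hxz hzU
    rw [hU, hU]
    exact Summable.tsum_le_tsum
      (fun n => mul_le_mul_of_nonneg_left (pow_le_pow_left₀ hx0 hxz n) (hp n))
      (hUconv x hx0 (lt_of_le_of_lt hxz hzU)) (hUconv z (le_trans hx0 hxz) hzU)
  have hUstrict : ∀ x z : ℝ, 0 ≤ x → x < z → z < xU → U x < U z := by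
    intro x z hx0 hxz hzU
    rw [hU, hU]
    refine Summable.tsum_lt_tsum_of_nonneg (i := N)
      (fun n => mul_nonneg (hp n) (by positivity))
      (fun n => mul_le_mul_of_nonneg_left (pow_le_pow_left₀ hx0 hxz.le n) (hp n))
      ?_ (hUconv z (le_trans hx0 hxz.le) hzU)
    exact mul_lt_mul_of_pos_left
      (pow_lt_pow_left₀ hxz hx0 (by omega)) hpN
  have hUleL : ∀ x : ℝ, 0 ≤ x → x < xU → U x ≤ L := by
    intro x hx0 hxU'
    refine ge_of_tendsto hL ?_
    filter_upwards [Ioo_mem_nhdsLT_of_mem (⟨hxU', le_refl xU⟩ : xU ∈ Set.Ioc x xU)]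
      with z hz
    exact hUmono x z hx0 hz.1.le hz.2
  have hUltL : ∀ x : ℝ, 0 ≤ x → x < xU → U x < L := by
    intro x hx0 hxU'
    have h1 : U x < U ((x + xU) / 2) := hUstrict x _ hx0 (by linarith) (by linarith)
    have h2 : U ((x + xU) / 2) ≤ L := hUleL _ (by linarith) (by linarith)
    linarith
  have hVwcxUpos : 0 < V (wc * xU) := hVpos _ hwcxU0.le hwcxU
  have hLpos : 0 < L := by
    nlinarith [hwceq, hVwcxUpos]
  -- the main convergence: x₁ w → xU from the left as w → wc⁺
  have hIooMem : Set.Ioo wc (xV / xU) ∈ 𝓝[>] wc :=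
    Ioo_mem_nhdsGT_of_mem ⟨le_refl wc, hwc.2⟩
  have hx₁lt : ∀ᶠ w in 𝓝[>] wc, x₁ w ∈ Set.Iio xU := by
    filter_upwards [hIooMem] with w hw
    exact (hx₁ w hw).1.2
  have hx₁gt : ∀ a : ℝ, a < xU → ∀ᶠ w in 𝓝[>] wc, a < x₁ w := by
    intro a ha
    set a' : ℝ := max a 0 with ha'def
    have ha'0 : 0 ≤ a' := le_max_right a 0
    have ha'U : a' < xU := max_lt ha hxU0
    have hwca' : wc * a' < xV := by
      have : wc * a' ≤ wc * xU := mul_le_mul_of_nonneg_left ha'U.le hwc0.le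
      nlinarith
    have he : U a' * V (wc * a') < 1 := by
      have h1 : V (wc * a') ≤ V (wc * xU) :=
        hVmono _ _ (mul_nonneg hwc0.le ha'0) (mul_le_mul_of_nonneg_left ha'U.le hwc0.le) hwcxU
      have h2 : U a' < L := hUltL a' ha'0 ha'U
      have h3 : 0 ≤ U a' := hUnn a' ha'0 ha'U
      calc U a' * V (wc * a') ≤ U a' * V (wc * xU) :=
            mul_le_mul_of_nonneg_left h1 h3
        _ < L * V (wc * xU) := mul_lt_mul_of_pos_right h2 hVwcxUpos
        _ = 1 := hwceq
    have hcont : ContinuousAt (fun w => U a' * V (w * a')) wc := by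
      have hc1 : ContinuousAt (fun w : ℝ => w * a') wc :=
        (continuousAt_id.mul continuousAt_const)
      have hc2 : ContinuousAt V (wc * a') := hVcont _ (mul_nonneg hwc0.le ha'0) hwca'
      have hc3 : ContinuousAt (fun w : ℝ => V (w * a')) wc :=
        ContinuousAt.comp (f := fun w : ℝ => w * a') hc2 hc1
      exact continuousAt_const.mul hc3
    have hev : ∀ᶠ w in 𝓝 wc, U a' * V (w * a') < 1 :=
      hcont.eventually_lt continuousAt_const he
    filter_upwards [hIooMem, hev.filter_mono nhdsWithin_le_nhds] with w hw hlt
    by_contra hcon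
    push_neg at hcon
    have hx1w := hx₁ w hw
    have hx1a' : x₁ w ≤ a' := le_trans hcon (le_max_left a 0)
    have hw0 : 0 < w := lt_trans hwc0 hw.1
    have hwa' : w * a' < xV := by
      have h1 : w * a' < w * xU := by
        rcases eq_or_lt_of_le ha'0 with h | h
        · rw [← h]; simpa using mul_pos hw0 hxU0
        · exact mul_lt_mul_of_pos_left ha'U hw0
      have h2 : w * xU < xV := by
        have := hw.2
        rw [lt_div_iff₀ hxU0] at this
        linarith
      linarith
    have hUle : U (x₁ w) ≤ U a' := hUmono _ _ hx1w.1.1.le hx1a' ha'U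
    have hVle : V (w * x₁ w) ≤ V (w * a') :=
      hVmono _ _ (mul_nonneg hw0.le hx1w.1.1.le)
        (mul_le_mul_of_nonneg_left hx1a' hw0.le) hwa'
    have hVnn2 : 0 ≤ V (w * x₁ w) :=
      hVnn _ (mul_nonneg hw0.le hx1w.1.1.le)
        (lt_of_le_of_lt (mul_le_mul_of_nonneg_left hx1a' hw0.le) hwa')
    have hUnn2 : 0 ≤ U a' := hUnn a' ha'0 ha'U
    have : U (x₁ w) * V (w * x₁ w) ≤ U a' * V (w * a') :=
      mul_le_mul hUle hVle hVnn2 hUnn2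
    rw [hx1w.2] at this
    linarith
  have hx₁tend0 : Filter.Tendsto x₁ (𝓝[>] wc) (𝓝 xU) := by
    refine tendsto_order.2 ⟨fun a ha => hx₁gt a ha, fun a ha => ?_⟩
    filter_upwards [hx₁lt] with w hw
    exact lt_trans hw ha
  have hx₁tend : Filter.Tendsto x₁ (𝓝[>] wc) (𝓝[<] xU) := by
    rw [tendsto_nhdsWithin_iff]
    exact ⟨hx₁tend0, hx₁lt⟩
  -- compose all limits
  have hwten : Filter.Tendsto (fun w : ℝ => w) (𝓝[>] wc) (𝓝 wc) :=
    Filter.tendsto_id.mono_right nhdsWithin_le_nhds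
  have hUx : Filter.Tendsto (fun w => U (x₁ w)) (𝓝[>] wc) (𝓝 L) := hL.comp hx₁tend
  have hU'x : Filter.Tendsto (fun w => deriv U (x₁ w)) (𝓝[>] wc) (𝓝 D) :=
    hU'lim.comp hx₁tend
  have hyx : Filter.Tendsto (fun w => w * x₁ w) (𝓝[>] wc) (𝓝 (wc * xU)) :=
    hwten.mul hx₁tend0
  have hVx : Filter.Tendsto (fun w => V (w * x₁ w)) (𝓝[>] wc) (𝓝 (V (wc * xU))) :=
    ((hVcont _ hwcxU0.le hwcxU).tendsto).comp hyx
  have hV'x : Filter.Tendsto (fun w => deriv V (w * x₁ w)) (𝓝[>] wc)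
      (𝓝 (deriv V (wc * xU))) := hderivVcont.tendsto.comp hyx
  have hnum : Filter.Tendsto (fun w => w * U (x₁ w) * deriv V (w * x₁ w)) (𝓝[>] wc)
      (𝓝 (wc * L * deriv V (wc * xU))) := (hwten.mul hUx).mul hV'x
  have hden : Filter.Tendsto
      (fun w => deriv U (x₁ w) * V (w * x₁ w) + w * U (x₁ w) * deriv V (w * x₁ w))
      (𝓝[>] wc) (𝓝 (D * V (wc * xU) + wc * L * deriv V (wc * xU))) :=
    (hU'x.mul hVx).add hnum
  have hApos : 0 < wc * L * deriv V (wc * xU) :=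
    mul_pos (mul_pos hwc0 hLpos) hV'pos
  have hBpos : 0 < D * V (wc * xU) := mul_pos hD0 hVwcxUpos
  have hdenpos : 0 < D * V (wc * xU) + wc * L * deriv V (wc * xU) := by linarith
  constructor
  · exact hnum.div hden (ne_of_gt hdenpos)
  · exact div_pos hApos hdenpos
end

section
/- Assume (U(x) − U_c)/(x_U − x)^{c−1} → U_0 as x → x_U⁻, where 1 < c < 2 and U_0 < 0. Fix s ≥ 0 with s·x_U·U_c²·V'(w_c·x_U) < |U_0|, and for x ∈ (0, x_U) set w(x) = w_c + s·(x_U − x)^{c−1}. Then the Poland–Scheraga generating function Z(x, w) = V(w·x)/(1 − U(x)·V(w·x)) satisfies lim_{x→x_U⁻} (x_U − x)^{c−1} · Z(x, w(x)) = 1/( |U_0| − U_c²·V'(w_c·x_U)·x_U·s ). That is, near the critical point Z(x, w) ≈ (x_U − x)^{−(c−1)}·F(s) with crossover exponent φ = c − 1 and scaling function F(s) = 1/(|U_0| − U_c² V'(w_c x_U) x_U s). -/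
open Filter Topology Set

/-! Since `U_c V(w_c x_U) = 1`, the denominator splits as
`1 - U V(w x) = -(U - U_c) V(w x) - U_c (V(w x) - V(w_c x_U))`, and both terms are of order
`ε = (x_U - x)^(c-1)`: the first by the hypothesis on `U`, the second because `V` is analytic at
`w_c x_U` (a point inside its disc of convergence) and `w(x) x - w_c x_U = s x ε - w_c (x_U - x)`,
where `x_U - x = o(ε)` because `c < 2`. -/

theorem analyticAt_tsum_mul_pow_of_nonneg {b : ℕ → ℝ} {R a : ℝ} (hb : ∀ n, 0 ≤ b n)
    (hsum : ∀ x, 0 ≤ x → x < R → Summable fun n => b n * x ^ n) (ha : |a| < R) :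
    AnalyticAt ℝ (fun x => ∑' n, b n * x ^ n) a := by
  set P := FormalMultilinearSeries.ofScalars ℝ b
  obtain ⟨r, har, hrR⟩ := exists_between ha
  have hr : 0 ≤ r := (abs_nonneg a).trans har.le
  have hradius : (r.toNNReal : ENNReal) ≤ P.radius := by
    refine P.le_radius_of_summable ?_
    simpa [P, FormalMultilinearSeries.ofScalars_norm, abs_of_nonneg (hb _), hr]
      using hsum r hr hrR
  have hmem : a ∈ Metric.eball (0 : ℝ) P.radius := by
    refine lt_of_lt_of_le ?_ hradius
    rw [edist_dist, Real.dist_eq, sub_zero, ← ENNReal.ofReal_coe_nnreal,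
      Real.coe_toNNReal _ hr]
    exact (ENNReal.ofReal_lt_ofReal_iff_of_nonneg (abs_nonneg a)).2 har
  have := (P.hasFPowerSeriesOnBall (pos_of_gt hmem)).analyticAt_of_mem hmem
  rwa [← FormalMultilinearSeries.ofScalarsSum, FormalMultilinearSeries.ofScalarsSum_eq_tsum] at this

theorem HasDerivAt.tendsto_comp_sub_div {α : Type*} {f : ℝ → ℝ} {a d m : ℝ} {l : Filter α}
    {g ε : α → ℝ} (hf : HasDerivAt f d a) (hg : Tendsto g l (𝓝 a))
    (hε : ∀ᶠ x in l, ε x ≠ 0) (hgε : Tendsto (fun x => (g x - a) / ε x) l (𝓝 m)) :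
    Tendsto (fun x => (f (g x) - f a) / ε x) l (𝓝 (m * d)) := by
  have hO : (fun x => g x - a) =O[l] ε :=
    Asymptotics.isBigO_of_div_tendsto_nhds (hε.mono fun x hx h => absurd h hx) m hgε
  have ho : (fun x => f (g x) - f a - (g x - a) * d) =o[l] ε := by
    have := (hasDerivAt_iff_isLittleO.mp hf).comp_tendsto hg
    simpa only [Function.comp_def, smul_eq_mul] using this.trans_isBigO hO
  simpa using (ho.tendsto_div_nhds_zero.add (hgε.mul_const d)).congr fun x => by ring

theorem tendsto_sub_rpow_nhdsLT {a p : ℝ} (hp : 0 < p) :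
    Tendsto (fun x => (a - x) ^ p) (𝓝[<] a) (𝓝 0) := by
  have := ((continuous_sub_left a).rpow_const fun _ => Or.inr hp.le).tendsto a
  simpa [Real.zero_rpow hp.ne'] using this.mono_left nhdsWithin_le_nhds

theorem tendsto_sub_div_sub_rpow_nhdsLT {a q : ℝ} (hq : q < 1) :
    Tendsto (fun x => (a - x) / (a - x) ^ q) (𝓝[<] a) (𝓝 0) := by
  refine (tendsto_sub_rpow_nhdsLT (a := a) (sub_pos.2 hq)).congr' ?_
  filter_upwards [self_mem_nhdsWithin] with x hx
  rw [Real.rpow_sub (sub_pos.2 hx), Real.rpow_one]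

theorem tendsto_mul_div_one_sub_mul {α : Type*} {l : Filter α} {u v ε : α → ℝ}
    {uc vc u0 m : ℝ} (hcrit : uc * vc = 1)
    (hu : Tendsto (fun x => (u x - uc) / ε x) l (𝓝 u0)) (hv : Tendsto v l (𝓝 vc))
    (hvε : Tendsto (fun x => (v x - vc) / ε x) l (𝓝 m)) (hL : -u0 - uc ^ 2 * m ≠ 0) :
    Tendsto (fun x => ε x * (v x / (1 - u x * v x))) l (𝓝 (1 / (-u0 - uc ^ 2 * m))) := by
  have hden : Tendsto (fun x => (1 - u x * v x) / ε x) l (𝓝 (-(u0 * vc + uc * m))) := by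
    refine ((hu.mul hv).add (hvε.const_mul uc)).neg.congr fun x => ?_
    rw [← hcrit]
    ring
  have hucL : uc * -(u0 * vc + uc * m) = -u0 - uc ^ 2 * m := by
    linear_combination (-u0) * hcrit
  have hL' : -(u0 * vc + uc * m) ≠ 0 := right_ne_zero_of_mul (hucL ▸ hL)
  convert hv.div hden hL' using 2
  · -- no hypothesis `ε x ≠ 0` is needed: both sides vanish there since `a / 0 = 0`
    rw [Pi.div_apply, div_div_eq_mul_div]
    ring
  · rw [← hucL, div_eq_div_iff (mul_ne_zero (left_ne_zero_of_mul_eq_one hcrit) hL') hL']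
    linear_combination (u0 * vc + uc * m) * hcrit

theorem stmt_12_general
    (b : ℕ → ℝ)
    (hb : ∀ n, 0 ≤ b n)
    (U V : ℝ → ℝ)
    (hV : ∀ x, V x = ∑' n, b n * x ^ n)
    (xU xV : ℝ) (hxU0 : 0 < xU)
    (hVconv : ∀ x : ℝ, 0 ≤ x → x < xV → Summable fun n => b n * x ^ n)
    (Uc : ℝ)
    (c U0 : ℝ) (hc1 : 1 < c) (hc2 : c < 2) (hU0neg : U0 < 0)
    (hU0 : Filter.Tendsto (fun x => (U x - Uc) / (xU - x) ^ (c - 1))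
      (𝓝[<] xU) (𝓝 U0))
    (wc : ℝ) (hwc1 : 1 ≤ wc) (hwc2 : wc < xV / xU)
    (hwceq : Uc * V (wc * xU) = 1)
    (s : ℝ)
    (hslt : s * xU * Uc ^ 2 * deriv V (wc * xU) < |U0|) :
    Filter.Tendsto
      (fun x => (xU - x) ^ (c - 1) *
        (V ((wc + s * (xU - x) ^ (c - 1)) * x) /
          (1 - U x * V ((wc + s * (xU - x) ^ (c - 1)) * x))))
      (𝓝[<] xU)
      (𝓝 (1 / (|U0| - Uc ^ 2 * deriv V (wc * xU) * xU * s))) := by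
  set ε : ℝ → ℝ := fun x => (xU - x) ^ (c - 1)
  set g : ℝ → ℝ := fun x => (wc + s * ε x) * x
  have hA : |wc * xU| < xV := by
    rw [abs_of_pos (by positivity)]
    exact (lt_div_iff₀ hxU0).mp hwc2
  have hVd : HasDerivAt V (deriv V (wc * xU)) (wc * xU) := by
    rw [funext hV]
    exact (analyticAt_tsum_mul_pow_of_nonneg hb hVconv hA).differentiableAt.hasDerivAt
  have hε : ∀ᶠ x in 𝓝[<] xU, ε x ≠ 0 :=
    eventually_nhdsWithin_of_forall fun x hx => (Real.rpow_pos_of_pos (sub_pos.2 hx) _).ne'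
  have hg : Tendsto g (𝓝[<] xU) (𝓝 (wc * xU)) := by
    simpa using (tendsto_const_nhds.add
      ((tendsto_sub_rpow_nhdsLT (sub_pos.2 hc1)).const_mul s)).mul
      (tendsto_id.mono_left nhdsWithin_le_nhds : Tendsto id (𝓝[<] xU) (𝓝 xU))
  have hgε : Tendsto (fun x => (g x - wc * xU) / ε x) (𝓝[<] xU) (𝓝 (s * xU)) := by
    have h := ((tendsto_id.mono_left nhdsWithin_le_nhds).const_mul s).sub
      ((tendsto_sub_div_sub_rpow_nhdsLT (a := xU) (by linarith : c - 1 < 1)).const_mul wc)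
    rw [mul_zero, sub_zero] at h
    refine h.congr' ?_
    filter_upwards [hε] with x hx
    simp only [g, ε, id] at hx ⊢
    field_simp
    ring
  have hL : -U0 - Uc ^ 2 * (s * xU * deriv V (wc * xU)) ≠ 0 := by
    rw [abs_of_neg hU0neg] at hslt
    nlinarith
  convert tendsto_mul_div_one_sub_mul hwceq hU0 (hVd.continuousAt.tendsto.comp hg)
    (hVd.tendsto_comp_sub_div hg hε hgε) hL using 2
  · rfl
  · rw [abs_of_neg hU0neg]
    ring

/-- With U(x) = U_c + U_0·(x_U−x)^(c−1) + o(...), 1 < c < 2, U_0 < 0,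
fix s ≥ 0 with s·x_U·U_c²·V'(w_c·x_U) < |U_0| and set w(x) = w_c + s·(x_U−x)^(c−1).
Then (x_U−x)^(c−1)·Z(x, w(x)) → 1/(|U_0| − U_c²·V'(w_c·x_U)·x_U·s) as x → x_U⁻,
where Z(x,w) = V(wx)/(1 − U(x)V(wx)). -/
theorem stmt_12
    (p b : ℕ → ℝ)
    (hp : ∀ n, 0 ≤ p n) (hp0 : p 0 = 0)
    (hb : ∀ n, 0 ≤ b n) (hb0 : 0 < b 0)
    (hpN : ∃ N, 1 ≤ N ∧ 0 < p N) (hbM : ∃ M, 1 ≤ M ∧ 0 < b M)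
    (U V : ℝ → ℝ)
    (hU : ∀ x, U x = ∑' n, p n * x ^ n)
    (hV : ∀ x, V x = ∑' n, b n * x ^ n)
    (xU xV : ℝ) (hxU0 : 0 < xU) (hxUV : xU < xV) (hxV1 : xV ≤ 1)
    (hUconv : ∀ x : ℝ, 0 ≤ x → x < xU → Summable fun n => p n * x ^ n)
    (hUdiv : ∀ x : ℝ, xU < x → ¬ Summable fun n => p n * x ^ n)
    (hVconv : ∀ x : ℝ, 0 ≤ x → x < xV → Summable fun n => b n * x ^ n)
    (hVdiv : ∀ x : ℝ, xV < x → ¬ Summable fun n => b n * x ^ n)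
    (hVinf : Filter.Tendsto V (𝓝[<] xV) Filter.atTop)
    (Uc : ℝ) (hUc : Filter.Tendsto U (𝓝[<] xU) (𝓝 Uc))
    (c U0 : ℝ) (hc1 : 1 < c) (hc2 : c < 2) (hU0neg : U0 < 0)
    (hU0 : Filter.Tendsto (fun x => (U x - Uc) / (xU - x) ^ (c - 1))
      (𝓝[<] xU) (𝓝 U0))
    (wc : ℝ) (hwc1 : 1 ≤ wc) (hwc2 : wc < xV / xU)
    (hwceq : Uc * V (wc * xU) = 1)
    (s : ℝ) (hs : 0 ≤ s)
    (hslt : s * xU * Uc ^ 2 * deriv V (wc * xU) < |U0|) :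
    Filter.Tendsto
      (fun x => (xU - x) ^ (c - 1) *
        (V ((wc + s * (xU - x) ^ (c - 1)) * x) /
          (1 - U x * V ((wc + s * (xU - x) ^ (c - 1)) * x))))
      (𝓝[<] xU)
      (𝓝 (1 / (|U0| - Uc ^ 2 * deriv V (wc * xU) * xU * s))) :=
  stmt_12_general b hb U V hV xU xV hxU0 hVconv Uc c U0 hc1 hc2 hU0neg hU0 wc hwc1 hwc2 hwceq s hslt
end

section
/- For every real w > 1, set x*(w) = (√(1 + (w−1)²) − 1)/(2(w−1)²). Then 0 < x*(w) < 1/4 and 2w·x*(w) < 1, and x*(w) is the unique x ∈ (0, 1/4) with 2wx < 1 satisfying (1 − 2x − √(1 − 4x)) / (1 − 2wx) = 1, i.e. U(x)·V(wx) = 1 for U(x) = 1 − 2x − √(1 − 4x) and V(x) = 1/(1 − 2x). Consequently the free energy of the fully directed Poland–Scheraga model in d = 2 equals f(w) = −log x*(w) = log( 2(w−1)² / (√(1 + (w−1)²) − 1) ). -/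
open Filter Topology Set

/-- For w > 1 set x*(w) = (√(1+(w−1)²) − 1)/(2(w−1)²).  Then
0 < x*(w) < 1/4, 2w·x*(w) < 1, x*(w) is the unique x ∈ (0, 1/4) with 2wx < 1
solving (1 − 2x − √(1 − 4x))/(1 − 2wx) = 1, and the free energy of the fully
directed PS model in d = 2 is −log x*(w) = log(2(w−1)²/(√(1+(w−1)²) − 1)). -/
theorem stmt_14 (w : ℝ) (hw : 1 < w) :
    (0 < (Real.sqrt (1 + (w - 1) ^ 2) - 1) / (2 * (w - 1) ^ 2) ∧
      (Real.sqrt (1 + (w - 1) ^ 2) - 1) / (2 * (w - 1) ^ 2) < 1 / 4) ∧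
    2 * w * ((Real.sqrt (1 + (w - 1) ^ 2) - 1) / (2 * (w - 1) ^ 2)) < 1 ∧
    ((1 - 2 * ((Real.sqrt (1 + (w - 1) ^ 2) - 1) / (2 * (w - 1) ^ 2)) -
        Real.sqrt (1 - 4 * ((Real.sqrt (1 + (w - 1) ^ 2) - 1) / (2 * (w - 1) ^ 2)))) /
      (1 - 2 * w * ((Real.sqrt (1 + (w - 1) ^ 2) - 1) / (2 * (w - 1) ^ 2))) = 1) ∧
    (∀ x : ℝ, x ∈ Set.Ioo 0 (1 / 4) → 2 * w * x < 1 →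
      (1 - 2 * x - Real.sqrt (1 - 4 * x)) / (1 - 2 * w * x) = 1 →
      x = (Real.sqrt (1 + (w - 1) ^ 2) - 1) / (2 * (w - 1) ^ 2)) ∧
    -Real.log ((Real.sqrt (1 + (w - 1) ^ 2) - 1) / (2 * (w - 1) ^ 2)) =
      Real.log (2 * (w - 1) ^ 2 / (Real.sqrt (1 + (w - 1) ^ 2) - 1)) := by
  have ha : (0 : ℝ) < (w - 1) ^ 2 := pow_pos (by linarith) 2
  set a : ℝ := (w - 1) ^ 2 with ha_def
  set s : ℝ := Real.sqrt (1 + a) with hs_def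
  have hs2 : s ^ 2 = 1 + a := Real.sq_sqrt (by linarith)
  have hs0 : 0 ≤ s := Real.sqrt_nonneg _
  have hs1 : 1 < s := by nlinarith
  set x : ℝ := (s - 1) / (2 * a) with hx_def
  -- key algebraic identities
  have hxpos : 0 < x := by
    apply div_pos (by linarith) (by linarith)
  have hxq : 2 * a * x = s - 1 := by
    rw [hx_def]; field_simp
  have hx14 : x < 1 / 4 := by
    rw [hx_def, div_lt_div_iff₀ (by linarith) (by norm_num)]
    nlinarith
  have hws : w - 1 < s := by nlinarith
  have hwx : 2 * w * x < 1 := by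
    rw [hx_def, ← mul_div_assoc, div_lt_one (by linarith)]
    nlinarith
  have h1 : (w - 1) ^ 2 = a := ha_def.symm
  have hkey : 1 - 4 * x = (2 * (w - 1) * x) ^ 2 := by
    have h4 : a * (1 - 4 * x) = a * ((2 * (w - 1) * x) ^ 2) := by
      linear_combination (-(2 * a * x + 1 + s)) * hxq + (-1 : ℝ) * hs2 +
        (-(4 * a * x ^ 2)) * h1
    exact mul_left_cancel₀ ha.ne' h4
  have hsqrt : Real.sqrt (1 - 4 * x) = 2 * (w - 1) * x := by
    rw [hkey, Real.sqrt_sq (by nlinarith)]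
  refine ⟨⟨hxpos, hx14⟩, hwx, ?_, ?_, ?_⟩
  · rw [hsqrt]
    rw [div_eq_one_iff_eq (by linarith)]
    ring
  · rintro y ⟨hy0, hy14⟩ hywx heq
    rw [div_eq_one_iff_eq (by linarith)] at heq
    have hsy : Real.sqrt (1 - 4 * y) = 2 * (w - 1) * y := by linarith
    have hy2 : 1 - 4 * y = (2 * (w - 1) * y) ^ 2 := by
      rw [← hsy, Real.sq_sqrt (by linarith)]
    have hx2 : 1 - 4 * x = (2 * (w - 1) * x) ^ 2 := hkey
    have hfac : (y - x) * (4 + 4 * a * (y + x)) = 0 := by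
      linear_combination hx2 - hy2 - (4 * (y ^ 2 - x ^ 2)) * h1
    rcases mul_eq_zero.mp hfac with h | h
    · linarith [sub_eq_zero.mp h]
    · nlinarith
  · rw [← Real.log_inv, hx_def, inv_div]
end
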